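/- arXiv:2005.12479 — 5 statements merged into one kernel-verified Lean document; each statement's English description precedes it below -/
import Mathlib

section
/- Let n > p ≥ 1 and let g: ℝ^{n×p} → ℝ^{n×p} be defined by g(X) = −(n−p−1) X (XᵀX)^{-1} on the set of full column-rank matrices X. Then at every X with XᵀX invertible, the matrix divergence of g equals diṽ g(X) = −(n−p−1)² (XᵀX)^{-1}; equivalently, Σ_{a=1}^{n} ∂(X(XᵀX)^{-1})_{aj}/∂X_{ai} = (n−p−1)((XᵀX)^{-1})_{ij}. -/
open MeasureTheory Matrix
open scoped ENNReal

noncomputable section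

/-- The matrix normal density `N_{n,p}(M, I_n, I_p)` evaluated at `X`
(entries `X a i` independent `N(M a i, 1)`). -/
def matNormalPDF {n p : ℕ} (M X : Fin n → Fin p → ℝ) : ℝ :=
  (2 * Real.pi) ^ (-((n : ℝ) * p) / 2) *
    Real.exp (-(∑ a, ∑ i, (X a i - M a i) ^ 2) / 2)

/-- Partial derivative with respect to the `(a,i)` entry. -/
def pd {n p : ℕ} (a : Fin n) (i : Fin p)
    (f : (Fin n → Fin p → ℝ) → ℝ) (X : Fin n → Fin p → ℝ) : ℝ :=
  fderiv ℝ f X (Pi.single a (Pi.single i 1))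

/-- The matrix Laplacian `(Δ̃ f)_{ij} = ∑ a, ∂² f / ∂X_{ai} ∂X_{aj}`. -/
def matLap {n p : ℕ} (f : (Fin n → Fin p → ℝ) → ℝ) (X : Fin n → Fin p → ℝ) :
    Matrix (Fin p) (Fin p) ℝ :=
  Matrix.of fun i j => ∑ a, pd a i (pd a j f) X

/-- The matrix quadratic risk `R(M, M̂) = E_M[(M̂(X) − M)ᵀ (M̂(X) − M)]`. -/
def mRisk {n p : ℕ} (M : Fin n → Fin p → ℝ)
    (est : (Fin n → Fin p → ℝ) → (Fin n → Fin p → ℝ)) :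
    Matrix (Fin p) (Fin p) ℝ :=
  Matrix.of fun i j =>
    ∫ X, (∑ a, (est X a i - M a i) * (est X a j - M a j)) * matNormalPDF M X

/-- `cᵀ R(M, M̂) c = E_M ‖(M̂(X) − M) c‖²`, as an extended real. -/
def quadRisk {n p : ℕ} (M : Fin n → Fin p → ℝ)
    (est : (Fin n → Fin p → ℝ) → (Fin n → Fin p → ℝ)) (c : Fin p → ℝ) : ℝ≥0∞ :=
  ∫⁻ X, ENNReal.ofReal ((∑ a, (∑ i, (est X a i - M a i) * c i) ^ 2) * matNormalPDF M X)

/-- Minimaxity under the matrix quadratic loss: for every `c`, the estimator attains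
`inf_{M̂'} sup_M cᵀ R(M, M̂') c`. -/
def Minimax {n p : ℕ} (est : (Fin n → Fin p → ℝ) → (Fin n → Fin p → ℝ)) : Prop :=
  ∀ c : Fin p → ℝ,
    (⨆ M, quadRisk M est c)
      = ⨅ (est' : (Fin n → Fin p → ℝ) → (Fin n → Fin p → ℝ)) (_ : Measurable est'),
          ⨆ M, quadRisk M est' c

/-- Surface measure on the unit sphere of a Euclidean space. -/
def sphμ (ι : Type*) [Fintype ι] :
    Measure (Metric.sphere (0 : EuclideanSpace ℝ ι) 1) :=
  (volume : Measure (EuclideanSpace ℝ ι)).toSphere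

/-- The rank-one perturbation `X + e ρᵀ`. -/
def pert {n p : ℕ} (X : Fin n → Fin p → ℝ) (e : EuclideanSpace ℝ (Fin n))
    (ρ : Fin p → ℝ) : Fin n → Fin p → ℝ :=
  fun a i => X a i + e a * ρ i

/-- Matrix superharmonicity for `(ℝ ∪ {∞})`-valued (i.e. `EReal`-valued, never `⊥`)
functions: lower semicontinuity, not identically `∞`, and the sphere mean inequality
`L(f : X, ρ) ≤ f X`, expressed through all truncations `min (f ·) k` (which are
integrable on the compact sphere, and whose averages increase to `L(f : X, ρ)`). -/
def MatrixSuperharmonicE {n p : ℕ} (f : (Fin n → Fin p → ℝ) → EReal) : Prop :=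
  LowerSemicontinuous f ∧ (∀ X, ⊥ < f X) ∧ (∃ X, f X ≠ ⊤) ∧
    ∀ (X : Fin n → Fin p → ℝ) (ρ : Fin p → ℝ) (k : ℕ),
      (((∫ e : Metric.sphere (0 : EuclideanSpace ℝ (Fin n)) 1,
            (min (f (pert X e ρ)) ((k : ℝ) : EReal)).toReal ∂(sphμ (Fin n)))
          / (sphμ (Fin n) Set.univ).toReal : ℝ) : EReal) ≤ f X

/-- Matrix superharmonicity for nonnegative `[0,∞]`-valued functions:
lower semicontinuity, not identically `∞`, and `L(f : X, ρ) ≤ f X`. -/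
def MatrixSuperharmonicNN {n p : ℕ} (f : (Fin n → Fin p → ℝ) → ℝ≥0∞) : Prop :=
  LowerSemicontinuous f ∧ (∃ X, f X ≠ ⊤) ∧
    ∀ (X : Fin n → Fin p → ℝ) (ρ : Fin p → ℝ),
      (∫⁻ e : Metric.sphere (0 : EuclideanSpace ℝ (Fin n)) 1,
          f (pert X e ρ) ∂(sphμ (Fin n))) / (sphμ (Fin n) Set.univ) ≤ f X

/-- Usual superharmonicity on a Euclidean space, for `(ℝ ∪ {∞})`-valued functions,
with sphere averages expressed through truncations as above. -/
def SuperharmonicE {ι : Type*} [Fintype ι] (g : EuclideanSpace ℝ ι → EReal) : Prop :=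
  LowerSemicontinuous g ∧ (∀ x, ⊥ < g x) ∧ (∃ x, g x ≠ ⊤) ∧
    ∀ (x : EuclideanSpace ℝ ι) (r : ℝ), 0 < r → ∀ k : ℕ,
      (((∫ e : Metric.sphere (0 : EuclideanSpace ℝ ι) 1,
            (min (g (x + r • (e : EuclideanSpace ℝ ι))) ((k : ℝ) : EReal)).toReal ∂(sphμ ι))
          / (sphμ ι Set.univ).toReal : ℝ) : EReal) ≤ g x

/-- The marginal density `m_π(X) = ∫ p(X∣M) π(M) dM` of a nonnegative prior. -/
def marginal {n p : ℕ} (pr : (Fin n → Fin p → ℝ) → ℝ≥0∞) (X : Fin n → Fin p → ℝ) :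
    ℝ≥0∞ :=
  ∫⁻ M, ENNReal.ofReal (matNormalPDF M X) * pr M

/-- The (generalized) Bayes estimator `M̂^π(X) = X + ∇̃ log m_π(X)`. -/
def bayesEst {n p : ℕ} (pr : (Fin n → Fin p → ℝ) → ℝ≥0∞)
    (X : Fin n → Fin p → ℝ) : Fin n → Fin p → ℝ :=
  fun a i => X a i + pd a i (fun Y => Real.log (marginal pr Y).toReal) X

/-- `h'` is the weak partial derivative of `h` with respect to the `(a,i)` entry:
both are locally integrable and integration by parts holds against every smooth
compactly supported test function. -/
def IsWeakDeriv {n p : ℕ} (h : (Fin n → Fin p → ℝ) → ℝ) (a : Fin n) (i : Fin p)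
    (h' : (Fin n → Fin p → ℝ) → ℝ) : Prop :=
  LocallyIntegrable h volume ∧ LocallyIntegrable h' volume ∧
    ∀ φ : (Fin n → Fin p → ℝ) → ℝ, ContDiff ℝ (⊤ : ℕ∞) φ → HasCompactSupport φ →
      ∫ X, h X * fderiv ℝ φ X (Pi.single a (Pi.single i 1)) = -∫ X, h' X * φ X

/-- The Efron–Morris estimator `M̂_EM(X) = X (I_p − (n−p−1)(XᵀX)⁻¹)`. -/
def estEM {n p : ℕ} (X : Fin n → Fin p → ℝ) : Fin n → Fin p → ℝ :=
  fun a i => (Matrix.of X * ((1 : Matrix (Fin p) (Fin p) ℝ)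
    - ((n : ℝ) - p - 1) • ((Matrix.of X)ᵀ * Matrix.of X)⁻¹)) a i

/-- `E_M[(XᵀX)⁻¹]`. -/
def expInv {n p : ℕ} (M : Fin n → Fin p → ℝ) : Matrix (Fin p) (Fin p) ℝ :=
  Matrix.of fun i j => ∫ X, ((Matrix.of X)ᵀ * Matrix.of X)⁻¹ i j * matNormalPDF M X

/-- The prior `π_{α,β}(M) = det(MᵀM + β I_p)^{-(α+n+p-1)/2}`, with value `∞`
where the determinant vanishes and the exponent is negative. -/
def priorAB {n p : ℕ} (α β : ℝ) (M : Fin n → Fin p → ℝ) : ℝ≥0∞ :=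
  ENNReal.ofReal
      (Matrix.det ((Matrix.of M)ᵀ * Matrix.of M + β • (1 : Matrix (Fin p) (Fin p) ℝ)))
    ^ (-(α + n + p - 1) / 2)

/-- The singular value shrinkage prior `π_SVS(M) = det(MᵀM)^{-(n-p-1)/2}`
(`= +∞` where `det(MᵀM) = 0`), the case `α = -2p`, `β = 0` of `priorAB`. -/
def svsPrior {n p : ℕ} (M : Fin n → Fin p → ℝ) : ℝ≥0∞ :=
  ENNReal.ofReal (Matrix.det ((Matrix.of M)ᵀ * Matrix.of M)) ^ (-((n : ℝ) - p - 1) / 2)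

/-- `∥M∥_F^{-c}` as a `[0,∞]`-valued prior (`= +∞` at `M = 0` when `c > 0`). -/
def frobPrior {n p : ℕ} (c : ℝ) (M : Fin n → Fin p → ℝ) : ℝ≥0∞ :=
  ENNReal.ofReal (Real.sqrt (∑ a, ∑ i, (M a i) ^ 2)) ^ (-c)

/-- The marginal density of `X` under a nonnegative real-valued prior density. -/
def marginalR {n p : ℕ} (pr : (Fin n → Fin p → ℝ) → ℝ) (X : Fin n → Fin p → ℝ) : ℝ :=
  ∫ M, matNormalPDF M X * pr M

/-- The posterior mean `E_π[M ∣ X]`. -/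
def postMean {n p : ℕ} (pr : (Fin n → Fin p → ℝ) → ℝ) (X : Fin n → Fin p → ℝ) :
    Fin n → Fin p → ℝ :=
  fun a i => (∫ M, M a i * (matNormalPDF M X * pr M)) / marginalR pr X

/-- The posterior expected matrix quadratic loss of the decision `A` at `X`:
`E_π[(A − M)ᵀ (A − M) ∣ X]`. -/
def postQuad {n p : ℕ} (pr : (Fin n → Fin p → ℝ) → ℝ) (X : Fin n → Fin p → ℝ)
    (A : Fin n → Fin p → ℝ) : Matrix (Fin p) (Fin p) ℝ :=
  Matrix.of fun i j =>
    (∫ M, (∑ a, (A a i - M a i) * (A a j - M a j)) * (matNormalPDF M X * pr M))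
      / marginalR pr X

/-- `det(MᵀM + β I_p)^{-(α+n+p-1)/2}` as a real-valued function (for `β > 0`). -/
def detPow {n p : ℕ} (α β : ℝ) (M : Fin n → Fin p → ℝ) : ℝ :=
  Matrix.det ((Matrix.of M)ᵀ * Matrix.of M + β • (1 : Matrix (Fin p) (Fin p) ℝ))
    ^ (-(α + n + p - 1) / 2)

end


section AuxDivergence

open Matrix

attribute [local instance] Matrix.linftyOpNormedRing Matrix.linftyOpNormedAlgebra

private lemma of_add' {n p : ℕ} (Y Z : Fin n → Fin p → ℝ) :
    Matrix.of (Y + Z) = Matrix.of Y + Matrix.of Z := rfl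

private lemma of_smul' {n p : ℕ} (c : ℝ) (Y : Fin n → Fin p → ℝ) :
    Matrix.of (c • Y) = c • Matrix.of Y := rfl

private noncomputable def clm2 {E F G : Type*}
    [NormedAddCommGroup E] [NormedSpace ℝ E] [FiniteDimensional ℝ E]
    [NormedAddCommGroup F] [NormedSpace ℝ F] [FiniteDimensional ℝ F]
    [NormedAddCommGroup G] [NormedSpace ℝ G]
    (f : E →ₗ[ℝ] F →ₗ[ℝ] G) : E →L[ℝ] F →L[ℝ] G :=
  LinearMap.toContinuousLinearMap
    (((LinearMap.toContinuousLinearMap : (F →ₗ[ℝ] G) ≃ₗ[ℝ] (F →L[ℝ] G)) :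
        (F →ₗ[ℝ] G) →ₗ[ℝ] (F →L[ℝ] G)).comp f)

@[simp] private lemma clm2_apply {E F G : Type*} [NormedAddCommGroup E] [NormedSpace ℝ E]
    [FiniteDimensional ℝ E] [NormedAddCommGroup F] [NormedSpace ℝ F] [FiniteDimensional ℝ F]
    [NormedAddCommGroup G] [NormedSpace ℝ G]
    (f : E →ₗ[ℝ] F →ₗ[ℝ] G) (x : E) (y : F) : clm2 f x y = f x y := rfl

private noncomputable def gramLin (n p : ℕ) :
    (Fin n → Fin p → ℝ) →ₗ[ℝ] (Fin n → Fin p → ℝ) →ₗ[ℝ] Matrix (Fin p) (Fin p) ℝ :=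
  LinearMap.mk₂ ℝ (fun Y Z => (Matrix.of Y)ᵀ * Matrix.of Z)
    (fun Y Y' Z => show (Matrix.of (Y + Y'))ᵀ * Matrix.of Z = _ by
      rw [of_add', Matrix.transpose_add, Matrix.add_mul])
    (fun c Y Z => show (Matrix.of (c • Y))ᵀ * Matrix.of Z = _ by
      rw [of_smul', Matrix.transpose_smul, Matrix.smul_mul])
    (fun Y Z Z' => show (Matrix.of Y)ᵀ * Matrix.of (Z + Z') = _ by
      rw [of_add', Matrix.mul_add])
    (fun c Y Z => show (Matrix.of Y)ᵀ * Matrix.of (c • Z) = _ by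
      rw [of_smul', Matrix.mul_smul])

private noncomputable def entryLin (n p : ℕ) (a : Fin n) (j : Fin p) :
    (Fin n → Fin p → ℝ) →ₗ[ℝ] Matrix (Fin p) (Fin p) ℝ →ₗ[ℝ] ℝ :=
  LinearMap.mk₂ ℝ (fun Y M => (Matrix.of Y * M) a j)
    (fun Y Y' M => show (Matrix.of (Y + Y') * M) a j = _ by
      rw [of_add', Matrix.add_mul]; simp)
    (fun c Y M => show (Matrix.of (c • Y) * M) a j = _ by
      rw [of_smul', Matrix.smul_mul]; simp)
    (fun Y M M' => show (Matrix.of Y * (M + M')) a j = _ by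
      rw [Matrix.mul_add]; simp)
    (fun c Y M => show (Matrix.of Y * (c • M)) a j = _ by
      rw [Matrix.mul_smul]; simp)

private lemma main_aux {n p : ℕ} (X : Fin n → Fin p → ℝ)
    (hX : IsUnit ((Matrix.of X)ᵀ * Matrix.of X).det) (a : Fin n) (j : Fin p) :
    ∃ D : (Fin n → Fin p → ℝ) →L[ℝ] ℝ,
      HasFDerivAt (fun Y => (Matrix.of Y * ((Matrix.of Y)ᵀ * Matrix.of Y)⁻¹) a j) D X ∧
      ∀ E : Fin n → Fin p → ℝ,
        D E = (Matrix.of E * ((Matrix.of X)ᵀ * Matrix.of X)⁻¹) a j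
          - (Matrix.of X * (((Matrix.of X)ᵀ * Matrix.of X)⁻¹
              * ((Matrix.of E)ᵀ * Matrix.of X + (Matrix.of X)ᵀ * Matrix.of E)
              * ((Matrix.of X)ᵀ * Matrix.of X)⁻¹)) a j := by
  have hA : IsUnit ((Matrix.of X)ᵀ * Matrix.of X) := (Matrix.isUnit_iff_isUnit_det _).2 hX
  have h1 : HasFDerivAt (fun Y : Fin n → Fin p → ℝ => (Matrix.of Y)ᵀ * Matrix.of Y)
      ((clm2 (gramLin n p)).precompR _ X (ContinuousLinearMap.id ℝ _)
        + (clm2 (gramLin n p)).precompL _ (ContinuousLinearMap.id ℝ _) X) X := by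
    have h := (clm2 (gramLin n p)).hasFDerivAt_of_bilinear
      (hasFDerivAt_id X) (hasFDerivAt_id X)
    simpa [gramLin] using h
  have h2 := hasFDerivAt_ringInverse (𝕜 := ℝ) hA.unit
  rw [hA.unit_spec] at h2
  have h3 := HasFDerivAt.comp
    (f := fun Y : Fin n → Fin p → ℝ => (Matrix.of Y)ᵀ * Matrix.of Y) X h2 h1
  have hfun : (fun Y : Fin n → Fin p → ℝ => ((Matrix.of Y)ᵀ * Matrix.of Y)⁻¹)
      = (Ring.inverse ∘ fun Y : Fin n → Fin p → ℝ => (Matrix.of Y)ᵀ * Matrix.of Y) :=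
    funext fun Y => Matrix.nonsing_inv_eq_ringInverse _
  rw [← hfun] at h3
  have h4 := (clm2 (entryLin n p a j)).hasFDerivAt_of_bilinear (hasFDerivAt_id X) h3
  have hu : (↑hA.unit⁻¹ : Matrix (Fin p) (Fin p) ℝ) = ((Matrix.of X)ᵀ * Matrix.of X)⁻¹ := by
    have h5 := Ring.inverse_unit hA.unit
    rw [hA.unit_spec] at h5
    rw [Matrix.nonsing_inv_eq_ringInverse, ← h5]
  have hfun2 : (fun y : Fin n → Fin p → ℝ =>
      ((clm2 (entryLin n p a j)) (id y)) (((Matrix.of y)ᵀ * Matrix.of y)⁻¹))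
      = fun Y => (Matrix.of Y * ((Matrix.of Y)ᵀ * Matrix.of Y)⁻¹) a j := rfl
  rw [hfun2] at h4
  refine ⟨_, h4, fun E => ?_⟩
  simp [entryLin, gramLin, hu, Matrix.mul_neg, Matrix.neg_apply, sub_eq_add_neg,
    Matrix.mul_add, Matrix.add_mul]
  ring

private lemma singleE_apply {n p : ℕ} (a : Fin n) (i : Fin p) (b : Fin n) (k : Fin p) :
    (Pi.single a (Pi.single i (1:ℝ)) : Fin n → Fin p → ℝ) b k
      = if b = a ∧ k = i then 1 else 0 := by
  rcases eq_or_ne b a with rfl | hb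
  · simp [Pi.single_apply]
  · simp [Pi.single_apply, hb]

private lemma claim0 {n p : ℕ} (S : Matrix (Fin p) (Fin p) ℝ) (a : Fin n) (i j : Fin p) :
    (Matrix.of (Pi.single a (Pi.single i (1:ℝ))) * S) a j = S i j := by
  simp only [Matrix.mul_apply, Matrix.of_apply]
  simp [singleE_apply, ite_and, ite_mul]

private lemma claim1 {n p : ℕ} (X : Fin n → Fin p → ℝ) (S : Matrix (Fin p) (Fin p) ℝ)
    (a : Fin n) (i j : Fin p) :
    (Matrix.of X * (S * ((Matrix.of (Pi.single a (Pi.single i (1:ℝ))))ᵀ * Matrix.of X) * S)) a j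
      = (Matrix.of X * S) a i * (Matrix.of X * S) a j := by
  simp only [Matrix.mul_apply, Matrix.transpose_apply, Matrix.of_apply]
  simp [Finset.sum_mul, Finset.mul_sum, mul_ite, ite_mul, Finset.sum_ite_eq,
    Finset.sum_ite_eq', singleE_apply, ite_and]
  rw [Finset.sum_comm]
  refine Finset.sum_congr rfl fun k _ => Finset.sum_congr rfl fun l _ => by ring

private lemma claim2 {n p : ℕ} (X : Fin n → Fin p → ℝ) (S : Matrix (Fin p) (Fin p) ℝ)
    (a : Fin n) (i j : Fin p) :
    (Matrix.of X * (S * ((Matrix.of X)ᵀ * Matrix.of (Pi.single a (Pi.single i (1:ℝ)))) * S)) a j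
      = (Matrix.of X * S * (Matrix.of X)ᵀ) a a * S i j := by
  simp only [Matrix.mul_apply, Matrix.transpose_apply, Matrix.of_apply]
  simp [Finset.sum_mul, Finset.mul_sum, mul_ite, ite_mul, Finset.sum_ite_eq,
    Finset.sum_ite_eq', singleE_apply, ite_and]
  rw [Finset.sum_comm]
  refine Finset.sum_congr rfl fun k _ => Finset.sum_congr rfl fun l _ => by ring

end AuxDivergence

/-- for `n > p ≥ 1` and `g(X) = −(n−p−1) X (XᵀX)⁻¹`, at every `X`
with `XᵀX` invertible, `diṽ g(X) = −(n−p−1)² (XᵀX)⁻¹`; equivalently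
`∑ a, ∂(X(XᵀX)⁻¹)_{aj}/∂X_{ai} = (n−p−1) ((XᵀX)⁻¹)_{ij}`. -/
theorem divergence_em_shrinkage {n p : ℕ} (hp : 1 ≤ p) (hnp : p < n)
    (X : Fin n → Fin p → ℝ)
    (hX : IsUnit ((Matrix.of X)ᵀ * Matrix.of X).det) :
    (Matrix.of fun i j => ∑ a, pd a i
        (fun Y => (-((n : ℝ) - p - 1))
          * (Matrix.of Y * ((Matrix.of Y)ᵀ * Matrix.of Y)⁻¹) a j) X)
      = (-((n : ℝ) - p - 1) ^ 2) • ((Matrix.of X)ᵀ * Matrix.of X)⁻¹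
    ∧ (Matrix.of fun i j => ∑ a, pd a i
        (fun Y => (Matrix.of Y * ((Matrix.of Y)ᵀ * Matrix.of Y)⁻¹) a j) X)
      = ((n : ℝ) - p - 1) • ((Matrix.of X)ᵀ * Matrix.of X)⁻¹ := by
  classical
  set S : Matrix (Fin p) (Fin p) ℝ := ((Matrix.of X)ᵀ * Matrix.of X)⁻¹ with hS
  have hAS : ((Matrix.of X)ᵀ * Matrix.of X) * S = 1 := Matrix.mul_nonsing_inv _ hX
  have hSA : S * ((Matrix.of X)ᵀ * Matrix.of X) = 1 := Matrix.nonsing_inv_mul _ hX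
  have hSsym : Sᵀ = S := by
    rw [hS, Matrix.transpose_nonsing_inv, Matrix.transpose_mul, Matrix.transpose_transpose]
  have hs1 : ∀ i j : Fin p, ∑ a, (Matrix.of X * S) a i * (Matrix.of X * S) a j = S i j := by
    intro i j
    have e1 : ∑ a, (Matrix.of X * S) a i * (Matrix.of X * S) a j
        = ((Matrix.of X * S)ᵀ * (Matrix.of X * S)) i j := by
      rw [Matrix.mul_apply]
      exact Finset.sum_congr rfl fun a _ => rfl
    rw [e1, Matrix.transpose_mul, hSsym, Matrix.mul_assoc,
      ← Matrix.mul_assoc ((Matrix.of X)ᵀ), hAS, Matrix.mul_one]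
  have hs2 : ∑ a, (Matrix.of X * S * (Matrix.of X)ᵀ) a a = (p : ℝ) := by
    have e1 : ∑ a, (Matrix.of X * S * (Matrix.of X)ᵀ) a a
        = (Matrix.of X * (S * (Matrix.of X)ᵀ)).trace := by
      rw [Matrix.trace, ← Matrix.mul_assoc]
      rfl
    rw [e1, Matrix.trace_mul_comm, Matrix.mul_assoc, hSA, Matrix.trace_one]
    simp
  have key : ∀ i j : Fin p,
      ∑ a, pd a i (fun Y => (Matrix.of Y * ((Matrix.of Y)ᵀ * Matrix.of Y)⁻¹) a j) X
        = ((n : ℝ) - p - 1) * S i j := by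
    intro i j
    have hsum : ∀ a : Fin n,
        pd a i (fun Y => (Matrix.of Y * ((Matrix.of Y)ᵀ * Matrix.of Y)⁻¹) a j) X
          = S i j - ((Matrix.of X * S) a i * (Matrix.of X * S) a j
              + (Matrix.of X * S * (Matrix.of X)ᵀ) a a * S i j) := by
      intro a
      obtain ⟨D, hD, hDE⟩ := main_aux X hX a j
      have hpd : pd a i (fun Y => (Matrix.of Y * ((Matrix.of Y)ᵀ * Matrix.of Y)⁻¹) a j) X
          = D (Pi.single a (Pi.single i 1)) := by
        rw [pd, hD.fderiv]
      rw [hpd, hDE, ← hS]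
      rw [Matrix.mul_add, Matrix.add_mul, Matrix.mul_add, Matrix.add_apply]
      rw [claim0, claim1, claim2]
    rw [Finset.sum_congr rfl fun a _ => hsum a]
    rw [Finset.sum_sub_distrib, Finset.sum_add_distrib, Finset.sum_const,
      ← Finset.sum_mul, hs1 i j, hs2, Finset.card_univ, Fintype.card_fin]
    ring
  constructor
  · ext i j
    have hdc : ∀ a : Fin n,
        pd a i (fun Y => (-((n : ℝ) - p - 1))
            * (Matrix.of Y * ((Matrix.of Y)ᵀ * Matrix.of Y)⁻¹) a j) X
          = (-((n : ℝ) - p - 1))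
            * pd a i (fun Y => (Matrix.of Y * ((Matrix.of Y)ᵀ * Matrix.of Y)⁻¹) a j) X := by
      intro a
      obtain ⟨D, hD, hDE⟩ := main_aux X hX a j
      have h1 := hD.const_mul (-((n : ℝ) - p - 1))
      rw [pd, pd, h1.fderiv, hD.fderiv]
      simp
    simp only [Matrix.of_apply, Matrix.smul_apply, smul_eq_mul]
    rw [Finset.sum_congr rfl fun a _ => hdc a, ← Finset.mul_sum, key i j]
    ring
  · ext i j
    simp only [Matrix.of_apply, Matrix.smul_apply, smul_eq_mul]
    exact key i j
end

section
/- Let π: ℝ^{n×p} → ℝ ∪ {∞} be matrix superharmonic and suppose the Gaussian convolution m_π(X) = ∫ φ(X − M) π(M) dM is finite for every X, where φ is the density of N_{n,p}(O, I_n, I_p). Then m_π is matrix superharmonic. -/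
open MeasureTheory Matrix
open scoped ENNReal

open Filter in
/-- Lower semicontinuity of a parametrized Lebesgue integral whose integrand is
continuous in the parameter. -/
lemma lsc_lintegral_param {α β : Type*} [MeasurableSpace α] [TopologicalSpace β]
    [FirstCountableTopology β] {μ : Measure α} {g : α → β → ℝ≥0∞}
    (hmeas : ∀ x, Measurable fun m => g m x) (hcont : ∀ m, Continuous (g m)) :
    LowerSemicontinuous fun x => ∫⁻ m, g m x ∂μ := by
  intro x y hy
  by_contra h
  rw [Filter.not_eventually] at h
  obtain ⟨u, hu, hFu⟩ := Filter.exists_seq_forall_of_frequently h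
  have key : (∫⁻ m, g m x ∂μ) ≤ y := by
    have h1 : (∫⁻ m, g m x ∂μ) = ∫⁻ m, liminf (fun k => g m (u k)) atTop ∂μ := by
      refine lintegral_congr fun m => ?_
      exact (((hcont m).tendsto x).comp hu).liminf_eq.symm
    rw [h1]
    refine le_trans (lintegral_liminf_le fun k => hmeas (u k)) ?_
    exact liminf_le_of_frequently_le' (Frequently.of_forall fun k => not_lt.mp (hFu k))
  exact absurd key (not_le.2 hy)

lemma matNormalPDF_contX {n p : ℕ} (M : Fin n → Fin p → ℝ) :
    Continuous fun X => matNormalPDF M X := by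
  unfold matNormalPDF; fun_prop

lemma matNormalPDF_contM {n p : ℕ} (X : Fin n → Fin p → ℝ) :
    Continuous fun M => matNormalPDF M X := by
  unfold matNormalPDF; fun_prop

lemma matNormalPDF_pos {n p : ℕ} (M X : Fin n → Fin p → ℝ) : 0 < matNormalPDF M X := by
  unfold matNormalPDF; positivity

lemma sphμ_univ_pos {n : ℕ} (hn : 0 < n) : 0 < sphμ (Fin n) Set.univ := by
  rw [sphμ, MeasureTheory.Measure.toSphere_apply_univ]
  have h1 : (0:ℝ≥0∞) < Module.finrank ℝ (EuclideanSpace ℝ (Fin n)) := by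
    simp [finrank_euclideanSpace_fin, hn]
  exact ENNReal.mul_pos h1.ne' (Metric.measure_ball_pos _ _ one_pos).ne'

lemma sphμ_univ_ne_top {n : ℕ} : sphμ (Fin n) Set.univ ≠ ⊤ := by
  show (volume : Measure (EuclideanSpace ℝ (Fin n))).toSphere Set.univ ≠ ⊤
  exact measure_ne_top _ _

lemma marginal_pert_eq {n p : ℕ} (pr : (Fin n → Fin p → ℝ) → ℝ≥0∞)
    (X : Fin n → Fin p → ℝ) (e : EuclideanSpace ℝ (Fin n)) (ρ : Fin p → ℝ) :
    marginal pr (pert X e ρ)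
      = ∫⁻ M, ENNReal.ofReal (matNormalPDF M X) * pr (pert M e ρ) := by
  unfold marginal
  rw [← lintegral_add_right_eq_self
      (fun M => ENNReal.ofReal (matNormalPDF M (pert X e ρ)) * pr M)
      ((fun a i => e a * ρ i : Fin n → Fin p → ℝ))]
  refine lintegral_congr fun M => ?_
  have h1 : matNormalPDF (M + (fun a i => e a * ρ i : Fin n → Fin p → ℝ)) (pert X e ρ)
      = matNormalPDF M X := by
    have hs : (∑ a, ∑ i, (pert X e ρ a i
          - (M + (fun a i => e a * ρ i : Fin n → Fin p → ℝ)) a i) ^ 2)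
        = ∑ a, ∑ i, (X a i - M a i) ^ 2 := by
      refine Finset.sum_congr rfl fun a _ => Finset.sum_congr rfl fun i _ => ?_
      simp only [pert, Pi.add_apply]; ring
    simp only [matNormalPDF, hs]
  have h2 : (M + (fun a i => e a * ρ i : Fin n → Fin p → ℝ)) = pert M e ρ := by
    funext a i; simp [pert, Pi.add_apply]
  rw [h1, h2]

/-- Lemma 4.2: if the prior `π` is matrix superharmonic and its
Gaussian convolution `m_π(X) = ∫ φ(X − M) π(M) dM` is finite everywhere, then `m_π`
is matrix superharmonic. -/
theorem marginal_matrixSuperharmonic {n p : ℕ} (hn : 0 < n) (hp : 0 < p)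
    (pr : (Fin n → Fin p → ℝ) → ℝ≥0∞) (hsh : MatrixSuperharmonicNN pr)
    (hfin : ∀ X : Fin n → Fin p → ℝ, marginal pr X ≠ ⊤) :
    MatrixSuperharmonicNN (marginal pr) := by
  obtain ⟨hlsc, -, hmean⟩ := hsh
  have hprm : Measurable pr := hlsc.measurable
  have hgm : ∀ X : Fin n → Fin p → ℝ,
      Measurable fun M => ENNReal.ofReal (matNormalPDF M X) * pr M := fun X =>
    ((ENNReal.continuous_ofReal.comp (matNormalPDF_contM X)).measurable).mul hprm
  refine ⟨?_, ⟨0, hfin 0⟩, ?_⟩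
  · refine lsc_lintegral_param hgm fun M => ?_
    by_cases hM : pr M = ⊤
    · have he : (fun Y => ENNReal.ofReal (matNormalPDF M Y) * pr M) = fun _ => (⊤ : ℝ≥0∞) := by
        funext Y
        rw [hM, ENNReal.mul_top]
        exact (ENNReal.ofReal_pos.2 (matNormalPDF_pos M Y)).ne'
      rw [he]; exact continuous_const
    · exact (ENNReal.continuous_mul_const hM).comp
        (ENNReal.continuous_ofReal.comp (matNormalPDF_contX M))
  · intro X ρ
    set c := sphμ (Fin n) Set.univ with hc
    have hc0 : c ≠ 0 := (sphμ_univ_pos hn).ne'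
    have hcT : c ≠ ⊤ := sphμ_univ_ne_top
    rw [ENNReal.div_le_iff hc0 hcT]
    haveI : IsFiniteMeasure (sphμ (Fin n)) :=
      inferInstanceAs (IsFiniteMeasure (volume : Measure (EuclideanSpace ℝ (Fin n))).toSphere)
    have hpertc : Continuous fun q :
        (Metric.sphere (0 : EuclideanSpace ℝ (Fin n)) 1) × (Fin n → Fin p → ℝ) =>
        pert q.2 (q.1 : EuclideanSpace ℝ (Fin n)) ρ := by
      refine continuous_pi fun a => continuous_pi fun i => Continuous.add ?_ ?_
      · exact (continuous_apply i).comp ((continuous_apply a).comp continuous_snd)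
      · exact (((EuclideanSpace.proj a : EuclideanSpace ℝ (Fin n) →L[ℝ] ℝ).continuous).comp
          (continuous_subtype_val.comp continuous_fst)).mul continuous_const
    have hFmeas : AEMeasurable (Function.uncurry fun
        (e : Metric.sphere (0 : EuclideanSpace ℝ (Fin n)) 1) (M : Fin n → Fin p → ℝ) =>
        ENNReal.ofReal (matNormalPDF M X) * pr (pert M (e : EuclideanSpace ℝ (Fin n)) ρ))
        ((sphμ (Fin n)).prod volume) := by
      refine Measurable.aemeasurable ?_
      exact (((ENNReal.continuous_ofReal.comp (matNormalPDF_contM X)).measurable).comp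
        measurable_snd).mul (hprm.comp hpertc.measurable)
    calc ∫⁻ e, marginal pr (pert X e ρ) ∂sphμ (Fin n)
        = ∫⁻ e, ∫⁻ M, ENNReal.ofReal (matNormalPDF M X)
            * pr (pert M (e : EuclideanSpace ℝ (Fin n)) ρ) ∂volume ∂sphμ (Fin n) :=
          lintegral_congr fun e => marginal_pert_eq pr X e ρ
      _ = ∫⁻ M, ∫⁻ e, ENNReal.ofReal (matNormalPDF M X)
            * pr (pert M (e : EuclideanSpace ℝ (Fin n)) ρ) ∂sphμ (Fin n) ∂volume :=
          lintegral_lintegral_swap hFmeas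
      _ = ∫⁻ M, ENNReal.ofReal (matNormalPDF M X)
            * ∫⁻ e, pr (pert M (e : EuclideanSpace ℝ (Fin n)) ρ) ∂sphμ (Fin n) ∂volume :=
          lintegral_congr fun M => lintegral_const_mul' _ _ ENNReal.ofReal_ne_top
      _ ≤ ∫⁻ M, ENNReal.ofReal (matNormalPDF M X) * (pr M * c) ∂volume := by
          refine lintegral_mono fun M => mul_le_mul_right ?_ _
          exact (ENNReal.div_le_iff hc0 hcT).1 (hmean M ρ)
      _ = marginal pr X * c := by
          simp only [← mul_assoc]
          exact lintegral_mul_const' _ _ hcT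
end

section
/- If f: ℝ^{n×p} → ℝ is matrix superharmonic and φ: ℝ → ℝ is monotone increasing and concave on the range of f, then φ ∘ f is matrix superharmonic. In particular, if f is matrix superharmonic and nonnegative, then √f is matrix superharmonic. -/
open MeasureTheory Matrix
open scoped ENNReal

open Filter Topology

section Aux

variable {α : Type*} [TopologicalSpace α]

lemma lsc_real_of_ereal {f : α → ℝ}
    (h : LowerSemicontinuous (fun x => (f x : EReal))) : LowerSemicontinuous f := by
  intro x c hc
  have h2 := h x (c : EReal) (EReal.coe_lt_coe_iff.2 hc)
  filter_upwards [h2] with y hy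
  exact EReal.coe_lt_coe_iff.1 hy

lemma lsc_ereal_of_real {f : α → ℝ}
    (h : LowerSemicontinuous f) : LowerSemicontinuous (fun x => (f x : EReal)) := by
  intro x c hc
  induction c with
  | bot => filter_upwards with y; exact EReal.bot_lt_coe _
  | coe c =>
      have hc' : (c : EReal) < (f x : EReal) := hc
      filter_upwards [h x c (EReal.coe_lt_coe_iff.1 hc')] with y hy
      exact EReal.coe_lt_coe_iff.2 hy
  | top =>
      have hc' : (⊤ : EReal) < (f x : EReal) := hc
      exact absurd hc' (by simp)

lemma lsc_bddBelow {β : Type*} [TopologicalSpace β] [CompactSpace β] {f : β → ℝ}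
    (hf : LowerSemicontinuous f) : ∃ C : ℝ, ∀ x, C ≤ f x := by
  obtain ⟨t, ht⟩ := IsCompact.elim_finite_subcover (isCompact_univ (X := β))
      (fun k : ℕ => f ⁻¹' Set.Ioi (-(k : ℝ))) (fun k => hf.isOpen_preimage _)
      (fun x _ => by
        obtain ⟨k, hk⟩ := exists_nat_gt (-f x)
        exact Set.mem_iUnion.2 ⟨k, by simp only [Set.mem_preimage, Set.mem_Ioi]; linarith⟩)
  refine ⟨-(t.sup id : ℕ), fun x => ?_⟩
  obtain ⟨k, hkt, hk⟩ := Set.mem_iUnion₂.1 (ht (Set.mem_univ x))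
  have hk' : -(k : ℝ) < f x := hk
  have : (k : ℝ) ≤ (t.sup id : ℕ) := by
    exact_mod_cast Finset.le_sup (f := id) hkt
  linarith

end Aux

section Aux2

lemma lsc_comp {α : Type*} [TopologicalSpace α] {f : α → ℝ} (hf : LowerSemicontinuous f)
    {s : Set ℝ} {φ : ℝ → ℝ} (hr : Set.range f ⊆ s) (hm : MonotoneOn φ s)
    (hcv : ConcaveOn ℝ s φ) :
    LowerSemicontinuous (fun x => φ (f x)) := by
  intro x₀ c hc
  by_cases hex : ∃ t ∈ s, t < f x₀ ∧ c < φ t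
  · obtain ⟨t, hts, htlt, htc⟩ := hex
    filter_upwards [hf x₀ t htlt] with y hy
    exact lt_of_lt_of_le htc (hm hts (hr ⟨y, rfl⟩) hy.le)
  · push_neg at hex
    by_cases hall : ∀ u ∈ s, f x₀ ≤ u
    · filter_upwards with y
      exact lt_of_lt_of_le hc (hm (hr ⟨x₀, rfl⟩) (hr ⟨y, rfl⟩) (hall _ (hr ⟨y, rfl⟩)))
    · exfalso
      push_neg at hall
      obtain ⟨a, has, halt⟩ := hall
      set b := f x₀ with hb
      have hbs : b ∈ s := hr ⟨x₀, rfl⟩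
      have hA : φ a ≤ c := hex a has halt
      have hBc : c < φ b := hc
      have hBA : 0 < φ b - φ a := by linarith
      -- choose μ ∈ (0,1) with (1-μ) φ a + μ φ b > c
      set l0 : ℝ := max ((c - φ a) / (φ b - φ a)) 0 with hl0
      have hl0lt : l0 < 1 := by
        rw [hl0, max_lt_iff]
        constructor
        · rw [div_lt_one hBA]; linarith
        · norm_num
      have hl00 : 0 ≤ l0 := le_max_right _ _
      set l : ℝ := (l0 + 1) / 2 with hl
      have hl1 : l < 1 := by rw [hl]; linarith
      have hlpos : 0 < l := by rw [hl]; linarith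
      have hlgt : (c - φ a) / (φ b - φ a) < l := by
        have : l0 < l := by rw [hl]; linarith
        exact lt_of_le_of_lt (le_max_left _ _) this
      have hchord : c < (1 - l) * φ a + l * φ b := by
        have := (div_lt_iff₀ hBA).1 hlgt
        nlinarith
      set t : ℝ := (1 - l) * a + l * b with ht
      have hts : t ∈ s := hcv.1 has hbs (by linarith) (le_of_lt hlpos) (by ring)
      have htlt : t < b := by
        have : t - b = (1 - l) * (a - b) := by rw [ht]; ring
        nlinarith
      have hφt : (1 - l) * φ a + l * φ b ≤ φ t := by
        have h2 := hcv.2 has hbs (show (0:ℝ) ≤ 1 - l by linarith) hlpos.le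
          (show (1 - l) + l = 1 by ring)
        simpa [smul_eq_mul] using h2
      exact absurd (lt_of_lt_of_le hchord hφt) (not_lt.2 (hex t hts htlt))

lemma key_jensen {β : Type*} [MeasurableSpace β] {μ : Measure β} [IsFiniteMeasure μ]
    {g : β → ℝ} {ψ : ℝ → ℝ} {s : Set ℝ} {b : ℝ}
    (hg : Integrable g μ) (hψg : Integrable (fun e => ψ (g e)) μ)
    (hgs : ∀ e, g e ∈ s) (hbs : b ∈ s)
    (hm : MonotoneOn ψ s) (hcv : ConcaveOn ℝ s ψ)
    (hgb : ∫ e, g e ∂μ ≤ (μ Set.univ).toReal * b) :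
    ∫ e, ψ (g e) ∂μ ≤ (μ Set.univ).toReal * ψ b := by
  set Ω : ℝ := (μ Set.univ).toReal with hΩ
  have hΩ0 : 0 ≤ Ω := ENNReal.toReal_nonneg
  by_cases h2 : ∃ c₀ ∈ s, b < c₀
  swap
  · -- all of s is ≤ b
    push_neg at h2
    have hle : ∀ e, ψ (g e) ≤ ψ b := fun e => hm (hgs e) hbs (h2 _ (hgs e))
    calc ∫ e, ψ (g e) ∂μ ≤ ∫ _, ψ b ∂μ := integral_mono hψg (integrable_const _) hle
      _ = Ω * ψ b := by rw [integral_const]; rw [smul_eq_mul]; rfl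
  · obtain ⟨c₀, hc₀s, hbc₀⟩ := h2
    by_cases h1 : ∃ a ∈ s, a < b
    · obtain ⟨a, has, hab⟩ := h1
      set S : Set ℝ := (fun t => (ψ t - ψ b) / (t - b)) '' {t | t ∈ s ∧ b < t} with hS
      have hSne : S.Nonempty := ⟨_, ⟨c₀, ⟨hc₀s, hbc₀⟩, rfl⟩⟩
      have hSbdd : BddAbove S := by
        refine ⟨(ψ b - ψ a) / (b - a), ?_⟩
        rintro x ⟨t, ⟨hts, hbt⟩, rfl⟩
        exact hcv.slope_anti_adjacent has hts hab hbt
      set L : ℝ := sSup S with hLdef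
      have hL0 : 0 ≤ L := by
        have hmem : (ψ c₀ - ψ b) / (c₀ - b) ∈ S := ⟨c₀, ⟨hc₀s, hbc₀⟩, rfl⟩
        have : 0 ≤ (ψ c₀ - ψ b) / (c₀ - b) :=
          div_nonneg (by linarith [hm hbs hc₀s (le_of_lt hbc₀)]) (by linarith)
        exact le_trans this (le_csSup hSbdd hmem)
      have hline : ∀ e, ψ (g e) ≤ ψ b + L * (g e - b) := by
        intro e
        rcases lt_trichotomy (g e) b with hlt | heq | hgt
        · have hub : L ≤ (ψ b - ψ (g e)) / (b - g e) := by
            refine csSup_le hSne ?_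
            rintro x ⟨t, ⟨hts, hbt⟩, rfl⟩
            exact hcv.slope_anti_adjacent (hgs e) hts hlt hbt
          have hb0 : 0 < b - g e := by linarith
          have := (le_div_iff₀ hb0).1 hub
          nlinarith
        · rw [heq]; nlinarith
        · have hlb : (ψ (g e) - ψ b) / (g e - b) ≤ L :=
            le_csSup hSbdd ⟨g e, ⟨hgs e, hgt⟩, rfl⟩
          have hb0 : 0 < g e - b := by linarith
          have := (div_le_iff₀ hb0).1 hlb
          nlinarith
      have hsub : Integrable (fun e => g e - b) μ := hg.sub (integrable_const _)
      have hmul : Integrable (fun e => L * (g e - b)) μ := hsub.const_mul L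
      have hint : Integrable (fun e => ψ b + L * (g e - b)) μ :=
        (integrable_const _).add hmul
      calc ∫ e, ψ (g e) ∂μ ≤ ∫ e, (ψ b + L * (g e - b)) ∂μ :=
            integral_mono hψg hint hline
        _ = Ω * ψ b + L * (∫ e, g e ∂μ - Ω * b) := by
            rw [integral_add (integrable_const _) hmul, integral_const,
              integral_const_mul, integral_sub hg (integrable_const _), integral_const]
            simp only [smul_eq_mul]; rfl
        _ ≤ Ω * ψ b := by nlinarith
    · -- b is a lower bound of s, so g = b a.e.
      push_neg at h1
      have hgeb : ∀ e, b ≤ g e := fun e => h1 _ (hgs e)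
      have hint : Integrable (fun e => g e - b) μ := hg.sub (integrable_const _)
      have hzero : ∫ e, (g e - b) ∂μ = 0 := by
        have hle : ∫ e, (g e - b) ∂μ ≤ 0 := by
          rw [integral_sub hg (integrable_const _), integral_const]
          simp only [smul_eq_mul]
          rw [show μ.real Set.univ = Ω from rfl]
          linarith
        have hge : 0 ≤ ∫ e, (g e - b) ∂μ :=
          integral_nonneg fun e => sub_nonneg.2 (hgeb e)
        linarith
      have hae : (fun e => g e - b) =ᵐ[μ] 0 :=
        (integral_eq_zero_iff_of_nonneg_ae
          (ae_of_all μ fun e => sub_nonneg.2 (hgeb e)) hint).1 hzero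
      have hae2 : (fun e => ψ (g e)) =ᵐ[μ] fun _ => ψ b := by
        filter_upwards [hae] with e he
        have : g e = b := by simpa [sub_eq_zero] using he
        rw [this]
      rw [integral_congr_ae hae2, integral_const, smul_eq_mul]; exact le_rfl

end Aux2


private lemma main_avg_ineq {n p : ℕ} (hn : 0 < n)
    {f : (Fin n → Fin p → ℝ) → ℝ} (hlsc : LowerSemicontinuous f)
    {s : Set ℝ} {φ : ℝ → ℝ} (hr : Set.range f ⊆ s) (hm : MonotoneOn φ s)
    (hcv : ConcaveOn ℝ s φ)
    (X : Fin n → Fin p → ℝ) (ρ : Fin p → ℝ) (k : ℕ)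
    (h4 : ∀ k' : ℕ,
      (∫ e : Metric.sphere (0 : EuclideanSpace ℝ (Fin n)) 1,
          min (f (pert X (e : EuclideanSpace ℝ (Fin n)) ρ)) ((k' : ℝ)) ∂(sphμ (Fin n)))
        / ((sphμ (Fin n)) Set.univ).toReal ≤ f X) :
    (∫ e : Metric.sphere (0 : EuclideanSpace ℝ (Fin n)) 1,
        min (φ (f (pert X (e : EuclideanSpace ℝ (Fin n)) ρ))) ((k : ℝ)) ∂(sphμ (Fin n)))
      / ((sphμ (Fin n)) Set.univ).toReal ≤ φ (f X) := by
  classical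
  set μ := sphμ (Fin n) with hμdef
  haveI : IsFiniteMeasure μ := by rw [hμdef]; unfold sphμ; infer_instance
  haveI : CompactSpace (Metric.sphere (0 : EuclideanSpace ℝ (Fin n)) 1) :=
    isCompact_iff_compactSpace.mp (isCompact_sphere _ _)
  set Ω : ℝ := (μ Set.univ).toReal with hΩdef
  have hΩpos : 0 < Ω := by
    have h1 : μ Set.univ = (Module.finrank ℝ (EuclideanSpace ℝ (Fin n)) : ℝ≥0∞)
        * volume (Metric.ball (0 : EuclideanSpace ℝ (Fin n)) 1) :=
      Measure.toSphere_apply_univ _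
    refine ENNReal.toReal_pos ?_ (measure_ne_top _ _)
    rw [h1]
    refine mul_ne_zero ?_ (Metric.measure_ball_pos volume 0 one_pos).ne'
    simp [finrank_euclideanSpace_fin, hn.ne']
  have hcont : Continuous fun e : Metric.sphere (0 : EuclideanSpace ℝ (Fin n)) 1 =>
      pert X (e : EuclideanSpace ℝ (Fin n)) ρ := by
    show Continuous fun e : Metric.sphere (0 : EuclideanSpace ℝ (Fin n)) 1 =>
      (fun a i => X a i + (e : EuclideanSpace ℝ (Fin n)) a * ρ i)
    exact continuous_pi fun a => continuous_pi fun i =>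
      continuous_const.add (((continuous_apply a).comp ((PiLp.continuous_ofLp 2 _).comp continuous_subtype_val)).mul
        continuous_const)
  set g : Metric.sphere (0 : EuclideanSpace ℝ (Fin n)) 1 → ℝ :=
    fun e => f (pert X (e : EuclideanSpace ℝ (Fin n)) ρ) with hgdef
  have hglsc : LowerSemicontinuous g := fun x c hcc =>
    (hcont.tendsto x).eventually (hlsc _ c hcc)
  obtain ⟨m, hmg⟩ := lsc_bddBelow hglsc
  have hintmin : ∀ c : ℝ, Integrable (fun e => min (g e) c) μ := by
    intro c
    refine ⟨(hglsc.measurable.min measurable_const).aestronglyMeasurable,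
      HasFiniteIntegral.of_bounded (C := |m| + |c|) (ae_of_all _ fun e => ?_)⟩
    rw [Real.norm_eq_abs, abs_le]
    constructor
    · refine le_min ?_ ?_
      · have := hmg e; have := neg_abs_le m; have := abs_nonneg c; linarith
      · have := neg_abs_le c; have := abs_nonneg m; linarith
    · have := min_le_right (g e) c; have := le_abs_self c; have := abs_nonneg m; linarith
  have h4' : ∀ k' : ℕ, ∫ e, min (g e) ((k' : ℝ)) ∂μ ≤ Ω * f X := by
    intro k'
    have h := h4 k'
    rw [div_le_iff₀ hΩpos] at h
    linarith
  set k₀ : ℕ := ⌈|m|⌉₊ with hk₀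
  have hmk : ∀ j : ℕ, m ≤ ((k₀ + j : ℕ) : ℝ) := by
    intro j
    have h1 : m ≤ |m| := le_abs_self m
    have h2 : |m| ≤ (k₀ : ℝ) := Nat.le_ceil _
    have h3 : (k₀ : ℝ) ≤ ((k₀ + j : ℕ) : ℝ) := by exact_mod_cast Nat.le_add_right _ _
    linarith
  have hmono : ∀ e, Monotone fun j : ℕ => min (g e) ((k₀ + j : ℕ) : ℝ) := by
    intro e j j' hj
    exact min_le_min le_rfl (by exact_mod_cast Nat.add_le_add_left hj k₀)
  have htends : ∀ e, Tendsto (fun j : ℕ => min (g e) ((k₀ + j : ℕ) : ℝ)) atTop (𝓝 (g e)) := by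
    intro e
    refine tendsto_const_nhds.congr' ?_
    filter_upwards [eventually_ge_atTop ⌈g e⌉₊] with j hj
    have hge : g e ≤ ((k₀ + j : ℕ) : ℝ) := by
      have h1 : g e ≤ (⌈g e⌉₊ : ℝ) := Nat.le_ceil _
      have h2 : ((⌈g e⌉₊ : ℕ) : ℝ) ≤ (j : ℝ) := by exact_mod_cast hj
      have h3 : (j : ℝ) ≤ ((k₀ + j : ℕ) : ℝ) := by exact_mod_cast Nat.le_add_left _ _
      linarith
    exact (min_eq_left hge).symm
  have hmeas_min : ∀ c : ℝ, Measurable fun e => min (g e) c := fun c =>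
    hglsc.measurable.min measurable_const
  have hlin : ∀ j : ℕ, (∫⁻ e, ENNReal.ofReal (min (g e) ((k₀ + j : ℕ) : ℝ) - m) ∂μ)
      ≤ ENNReal.ofReal (Ω * f X - Ω * m) := by
    intro j
    have hsubint : Integrable (fun e => min (g e) ((k₀ + j : ℕ) : ℝ) - m) μ :=
      (hintmin _).sub (integrable_const m)
    rw [← ofReal_integral_eq_lintegral_ofReal hsubint
      (ae_of_all _ fun e => sub_nonneg.2 (le_min (hmg e) (hmk j)))]
    apply ENNReal.ofReal_le_ofReal
    rw [integral_sub (hintmin _) (integrable_const m), integral_const, smul_eq_mul]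
    have := h4' (k₀ + j)
    rw [show μ.real Set.univ = Ω from rfl]
    linarith
  have hMCT := lintegral_tendsto_of_tendsto_of_monotone (μ := μ)
    (f := fun j e => ENNReal.ofReal (min (g e) ((k₀ + j : ℕ) : ℝ) - m))
    (F := fun e => ENNReal.ofReal (g e - m))
    (fun j => (((hmeas_min _).sub measurable_const).ennreal_ofReal).aemeasurable)
    (ae_of_all _ fun e j j' hj => ENNReal.ofReal_le_ofReal (by
      have := hmono e hj; simp only at this ⊢; linarith))
    (ae_of_all _ fun e => (ENNReal.continuous_ofReal.tendsto _).comp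
      ((htends e).sub_const m))
  have hfin : ∫⁻ e, ENNReal.ofReal (g e - m) ∂μ ≤ ENNReal.ofReal (Ω * f X - Ω * m) :=
    le_of_tendsto hMCT (Eventually.of_forall hlin)
  have hgm_int : Integrable (fun e => g e - m) μ :=
    ⟨(hglsc.measurable.sub measurable_const).aestronglyMeasurable,
      (hasFiniteIntegral_iff_ofReal (ae_of_all _ fun e => sub_nonneg.2 (hmg e))).2
        (lt_of_le_of_lt hfin ENNReal.ofReal_lt_top)⟩
  have hg_int : Integrable g μ :=
    (hgm_int.add (integrable_const m)).congr (ae_of_all _ fun e => by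
      simp [Pi.add_apply])
  have hIg : ∫ e, g e ∂μ ≤ Ω * f X := by
    have hten := integral_tendsto_of_tendsto_of_monotone
      (f := fun j e => min (g e) ((k₀ + j : ℕ) : ℝ)) (F := g)
      (fun j => hintmin _) hg_int (ae_of_all _ hmono) (ae_of_all _ htends)
    exact le_of_tendsto hten (Eventually.of_forall fun j => h4' _)
  set ψ : ℝ → ℝ := fun t => min (φ t) ((k : ℝ)) with hψdef
  have hψm : MonotoneOn ψ s := fun x hx y hy hxy => min_le_min (hm hx hy hxy) le_rfl
  have hψcv : ConcaveOn ℝ s ψ := by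
    refine ⟨hcv.1, fun x hx y hy a b ha hb hab => ?_⟩
    have h2 := hcv.2 hx hy ha hb hab
    simp only [smul_eq_mul, hψdef] at h2 ⊢
    refine le_min ?_ ?_
    · calc a * min (φ x) ((k : ℝ)) + b * min (φ y) ((k : ℝ))
          ≤ a * φ x + b * φ y := add_le_add
            (mul_le_mul_of_nonneg_left (min_le_left _ _) ha)
            (mul_le_mul_of_nonneg_left (min_le_left _ _) hb)
        _ ≤ φ (a * x + b * y) := h2
    · calc a * min (φ x) ((k : ℝ)) + b * min (φ y) ((k : ℝ))
          ≤ a * (k : ℝ) + b * (k : ℝ) := add_le_add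
            (mul_le_mul_of_nonneg_left (min_le_right _ _) ha)
            (mul_le_mul_of_nonneg_left (min_le_right _ _) hb)
        _ = (k : ℝ) := by rw [← add_mul, hab, one_mul]
  have hφlsc : LowerSemicontinuous fun Y => φ (f Y) := lsc_comp hlsc hr hm hcv
  have hφg : LowerSemicontinuous fun e : Metric.sphere (0 : EuclideanSpace ℝ (Fin n)) 1 =>
      φ (g e) := fun x c hcc => (hcont.tendsto x).eventually (hφlsc _ c hcc)
  obtain ⟨C, hC⟩ := lsc_bddBelow hφg
  have hψg_int : Integrable (fun e => ψ (g e)) μ := by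
    refine ⟨(hφg.measurable.min measurable_const).aestronglyMeasurable,
      HasFiniteIntegral.of_bounded (C := |C| + |(k : ℝ)|) (ae_of_all _ fun e => ?_)⟩
    rw [Real.norm_eq_abs, abs_le]
    constructor
    · refine le_min ?_ ?_
      · have := hC e; have := neg_abs_le C; have := abs_nonneg ((k : ℝ)); linarith
      · have := neg_abs_le ((k : ℝ)); have := abs_nonneg C; linarith
    · have h1 := min_le_right (φ (g e)) ((k : ℝ))
      have h2 := le_abs_self ((k : ℝ))
      have h3 := abs_nonneg C
      linarith
  have hkey := key_jensen (b := f X) hg_int hψg_int (fun e => hr ⟨_, rfl⟩)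
    (hr ⟨X, rfl⟩) hψm hψcv hIg
  have hfinal : ∫ e, ψ (g e) ∂μ ≤ Ω * φ (f X) := by
    refine le_trans hkey ?_
    have hle : ψ (f X) ≤ φ (f X) := min_le_left _ _
    nlinarith [hΩpos]
  rw [div_le_iff₀ hΩpos]
  calc (∫ e, min (φ (g e)) ((k : ℝ)) ∂μ) = ∫ e, ψ (g e) ∂μ := rfl
    _ ≤ Ω * φ (f X) := hfinal
    _ = φ (f X) * Ω := mul_comm _ _

private lemma ereal_min_toReal (a c : ℝ) :
    (min (a : EReal) (c : EReal)).toReal = min a c := by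
  rcases le_total a c with h | h
  · rw [min_eq_left (EReal.coe_le_coe_iff.2 h), EReal.toReal_coe, min_eq_left h]
  · rw [min_eq_right (EReal.coe_le_coe_iff.2 h), EReal.toReal_coe, min_eq_right h]


/-- Lemma 4.3: if `f : ℝ^{n×p} → ℝ` is matrix superharmonic and
`φ : ℝ → ℝ` is monotone increasing and concave on (a convex set containing) the
range of `f`, then `φ ∘ f` is matrix superharmonic.  In particular, if `f` is
matrix superharmonic and nonnegative then `√f` is matrix superharmonic. -/
theorem matrixSuperharmonic_comp_concave {n p : ℕ} (hn : 0 < n) (hp : 0 < p)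
    (f : (Fin n → Fin p → ℝ) → ℝ)
    (hf : MatrixSuperharmonicE (fun X => (f X : EReal))) :
    (∀ (s : Set ℝ) (φ : ℝ → ℝ), Set.range f ⊆ s → MonotoneOn φ s → ConcaveOn ℝ s φ →
      MatrixSuperharmonicE (fun X => (φ (f X) : EReal)))
    ∧ ((∀ X, 0 ≤ f X) →
      MatrixSuperharmonicE (fun X => ((Real.sqrt (f X) : ℝ) : EReal))) := by
  have hlsc : LowerSemicontinuous f := lsc_real_of_ereal hf.1
  have main : ∀ (s : Set ℝ) (φ : ℝ → ℝ), Set.range f ⊆ s → MonotoneOn φ s → ConcaveOn ℝ s φ →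
      MatrixSuperharmonicE (fun X => (φ (f X) : EReal)) := by
    intro s φ hr hm hcv
    refine ⟨lsc_ereal_of_real (lsc_comp hlsc hr hm hcv), fun X => EReal.bot_lt_coe _,
      ⟨fun _ _ => 0, EReal.coe_ne_top _⟩, ?_⟩
    intro X ρ k
    have h4 : ∀ k' : ℕ,
        (∫ e : Metric.sphere (0 : EuclideanSpace ℝ (Fin n)) 1,
            min (f (pert X (e : EuclideanSpace ℝ (Fin n)) ρ)) ((k' : ℝ)) ∂(sphμ (Fin n)))
          / ((sphμ (Fin n)) Set.univ).toReal ≤ f X := by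
      intro k'
      have h := hf.2.2.2 X ρ k'
      have h' : ((((∫ e : Metric.sphere (0 : EuclideanSpace ℝ (Fin n)) 1,
            (min ((f (pert X (e : EuclideanSpace ℝ (Fin n)) ρ) : ℝ) : EReal)
              (((k' : ℝ) : EReal))).toReal ∂(sphμ (Fin n)))
          / ((sphμ (Fin n)) Set.univ).toReal : ℝ) : EReal)) ≤ ((f X : ℝ) : EReal) := h
      have h'' := EReal.coe_le_coe_iff.1 h'
      simpa only [ereal_min_toReal] using h''
    have hmain := main_avg_ineq hn hlsc hr hm hcv X ρ k h4
    refine (EReal.coe_le_coe_iff.2 ?_ :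
      ((((∫ e : Metric.sphere (0 : EuclideanSpace ℝ (Fin n)) 1,
            (min ((φ (f (pert X (e : EuclideanSpace ℝ (Fin n)) ρ)) : ℝ) : EReal)
              (((k : ℝ) : EReal))).toReal ∂(sphμ (Fin n)))
          / ((sphμ (Fin n)) Set.univ).toReal : ℝ) : EReal)) ≤ ((φ (f X) : ℝ) : EReal))
    simpa only [ereal_min_toReal] using hmain
  exact ⟨main, fun h0 => main (Set.Ici 0) Real.sqrt
    (by rintro t ⟨Y, rfl⟩; exact h0 Y)
    (fun x _ y _ h => Real.sqrt_le_sqrt h)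
    Real.strictConcaveOn_sqrt.concaveOn⟩
end

section
/- Let n, p be positive integers and let α, β be real numbers with −n−p+1 ≤ α ≤ −2p and β > 0. Then the matrix Laplacian of f(M) = det(MᵀM + βI_p)^{-(α+n+p−1)/2} is Δ̃f(M) = ((α+n+p−1)/2)·det(S)^{-(α+n+p−1)/2}·(2(α+2p) S^{-1} − 2(α+n+p)β (S^{-1})² − 2β tr(S^{-1}) S^{-1}) with S = MᵀM + βI_p, and this matrix is negative semidefinite for every M ∈ ℝ^{n×p}. -/
open MeasureTheory Matrix
open scoped ENNReal

noncomputable section Aux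

attribute [local instance] Matrix.linftyOpNormedAddCommGroup Matrix.linftyOpNormedSpace
  Matrix.linftyOpNormedRing Matrix.linftyOpNormedAlgebra

variable {n p : ℕ}

def pEquiv (p : ℕ) : (Fin p → Fin p → ℝ) ≃L[ℝ] Matrix (Fin p) (Fin p) ℝ :=
  LinearEquiv.toContinuousLinearEquiv (Matrix.ofLinearEquiv ℝ)

/-- coordinate projection -/
def prj (a : Fin n) (i : Fin p) : (Fin n → Fin p → ℝ) →L[ℝ] ℝ :=
  (ContinuousLinearMap.proj (R := ℝ) (φ := fun _ : Fin p => ℝ) i).comp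
    (ContinuousLinearMap.proj (R := ℝ) (φ := fun _ : Fin n => Fin p → ℝ) a)

@[simp] theorem prj_apply (a : Fin n) (i : Fin p) (H : Fin n → Fin p → ℝ) :
    prj a i H = H a i := rfl

def Sm (β : ℝ) (M : Fin n → Fin p → ℝ) : Matrix (Fin p) (Fin p) ℝ :=
  (Matrix.of M)ᵀ * Matrix.of M + β • 1

def SD (M : Fin n → Fin p → ℝ) : (Fin n → Fin p → ℝ) →L[ℝ] Matrix (Fin p) (Fin p) ℝ :=
  LinearMap.toContinuousLinearMap
    { toFun := fun H => (Matrix.of H)ᵀ * Matrix.of M + (Matrix.of M)ᵀ * Matrix.of H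
      map_add' := fun H K => by
        ext i j
        simp only [Matrix.add_apply, Matrix.mul_apply, Matrix.transpose_apply, Matrix.of_apply,
          Pi.add_apply, ← Finset.sum_add_distrib]
        exact Finset.sum_congr rfl fun a _ => by ring
      map_smul' := fun r H => by
        ext i j
        simp only [Matrix.add_apply, Matrix.mul_apply, Matrix.transpose_apply, Matrix.of_apply,
          Pi.smul_apply, RingHom.id_apply, Matrix.smul_apply, smul_eq_mul,
          ← Finset.sum_add_distrib, Finset.mul_sum]
        exact Finset.sum_congr rfl fun a _ => by ring }

@[simp] theorem SD_apply (M H : Fin n → Fin p → ℝ) :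
    SD M H = (Matrix.of H)ᵀ * Matrix.of M + (Matrix.of M)ᵀ * Matrix.of H := rfl

theorem hasFDerivAt_Sm (β : ℝ) (M : Fin n → Fin p → ℝ) :
    HasFDerivAt (Sm β (n := n) (p := p)) (SD M) M := by
  rw [show Sm β (n := n) (p := p)
      = fun M => (pEquiv p) ((pEquiv p).symm (Sm β M)) from by ext M i j; simp [pEquiv]]
  rw [show SD M = ((pEquiv p : (Fin p → Fin p → ℝ) →L[ℝ] Matrix (Fin p) (Fin p) ℝ)).comp
      (((pEquiv p).symm : Matrix (Fin p) (Fin p) ℝ →L[ℝ] _).comp (SD M)) from by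
    ext H i j; simp [pEquiv]]
  apply (pEquiv p).toContinuousLinearMap.hasFDerivAt.comp
  have : (fun M : Fin n → Fin p → ℝ => (pEquiv p).symm (Sm β M))
      = fun M => (fun k l => (∑ a, M a k * M a l) + β * (1 : Matrix (Fin p) (Fin p) ℝ) k l) := by
    funext M k l
    simp [pEquiv, Sm, Matrix.mul_apply, Matrix.add_apply, Matrix.smul_apply, Matrix.one_apply]
  rw [this]
  rw [hasFDerivAt_pi']
  intro k
  rw [hasFDerivAt_pi']
  intro l
  have h : HasFDerivAt (fun M : Fin n → Fin p → ℝ => (∑ a, M a k * M a l)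
        + β * (1 : Matrix (Fin p) (Fin p) ℝ) k l)
      (∑ a, (M a k • prj a l + M a l • prj a k)) M := by
    have he : (fun M : Fin n → Fin p → ℝ => ∑ a, M a k * M a l)
        = fun M => ∑ a, prj a k M * prj a l M := by
      funext M; exact Finset.sum_congr rfl fun a _ => rfl
    apply HasFDerivAt.add_const
    rw [he]
    exact HasFDerivAt.fun_sum fun a _ => ((prj a k).hasFDerivAt.mul (prj a l).hasFDerivAt)
  refine h.congr_fderiv (Eq.symm ?_)
  ext H : 1
  simp only [ContinuousLinearMap.coe_comp', Function.comp_apply, ContinuousLinearMap.proj_apply,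
    ContinuousLinearMap.coe_sum', Finset.sum_apply, ContinuousLinearMap.add_apply,
    ContinuousLinearMap.coe_smul', Pi.smul_apply, prj_apply, smul_eq_mul,
    ContinuousLinearEquiv.coe_coe]
  show ((pEquiv p).symm (SD M H)) k l = _
  simp [pEquiv, SD_apply, Matrix.add_apply, Matrix.mul_apply, Matrix.transpose_apply]
  rw [← Finset.sum_add_distrib]
  exact Finset.sum_congr rfl fun a _ => by ring


/-- entry projection for p×p matrices -/
def eprj (k l : Fin p) : Matrix (Fin p) (Fin p) ℝ →L[ℝ] ℝ :=
  LinearMap.toContinuousLinearMap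
    { toFun := fun A => A k l
      map_add' := fun A B => rfl
      map_smul' := fun r A => rfl }

@[simp] theorem eprj_apply (k l : Fin p) (A : Matrix (Fin p) (Fin p) ℝ) :
    eprj k l A = A k l := rfl

theorem Sm_posDef {β : ℝ} (hβ : 0 < β) (M : Fin n → Fin p → ℝ) : (Sm β M).PosDef := by
  apply Matrix.PosDef.posSemidef_add
  · have h := Matrix.posSemidef_conjTranspose_mul_self (Matrix.of M)
    rwa [Matrix.conjTranspose_eq_transpose_of_trivial] at h
  · rw [Matrix.smul_one_eq_diagonal]
    exact Matrix.PosDef.diagonal fun _ => hβ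

theorem Sm_det_pos {β : ℝ} (hβ : 0 < β) (M : Fin n → Fin p → ℝ) : 0 < (Sm β M).det :=
  (Sm_posDef hβ M).det_pos

theorem Sm_isUnit {β : ℝ} (hβ : 0 < β) (M : Fin n → Fin p → ℝ) : IsUnit (Sm β M) :=
  (Matrix.isUnit_iff_isUnit_det _).mpr (isUnit_iff_ne_zero.mpr (Sm_det_pos hβ M).ne')

theorem Sm_transpose {β : ℝ} (hβ : 0 < β) (M : Fin n → Fin p → ℝ) : (Sm β M)ᵀ = Sm β M := by
  have h := (Sm_posDef hβ M).isHermitian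
  rwa [Matrix.IsHermitian, Matrix.conjTranspose_eq_transpose_of_trivial] at h

/-- derivative of the matrix inverse of Sm -/
def invD (β : ℝ) (M : Fin n → Fin p → ℝ) :
    (Fin n → Fin p → ℝ) →L[ℝ] Matrix (Fin p) (Fin p) ℝ :=
  (-(ContinuousLinearMap.mulLeftRight ℝ _ (Sm β M)⁻¹ (Sm β M)⁻¹)).comp (SD M)

theorem invD_apply (β : ℝ) (M H : Fin n → Fin p → ℝ) :
    invD β M H = -((Sm β M)⁻¹ * SD M H * (Sm β M)⁻¹) := by
  rfl

theorem hasFDerivAt_inv_Sm {β : ℝ} (hβ : 0 < β) (M : Fin n → Fin p → ℝ) :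
    HasFDerivAt (fun M : Fin n → Fin p → ℝ => (Sm β M)⁻¹) (invD β M) M := by
  have hU := Sm_isUnit (n := n) hβ M
  have h1 := hasFDerivAt_ringInverse (𝕜 := ℝ) hU.unit
  rw [IsUnit.unit_spec] at h1
  have h2 := h1.comp M (hasFDerivAt_Sm β M)
  have he : (fun M : Fin n → Fin p → ℝ => (Sm β M)⁻¹)
      = fun M => Ring.inverse (Sm β M) := by
    funext M; rw [Matrix.nonsing_inv_eq_ringInverse]
  rw [he]
  refine h2.congr_fderiv (Eq.symm ?_)
  ext H : 1
  simp only [invD, ContinuousLinearMap.coe_comp', Function.comp_apply,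
    ContinuousLinearMap.neg_apply, ContinuousLinearMap.mulLeftRight_apply]
  rw [show ((hU.unit⁻¹ : (Matrix (Fin p) (Fin p) ℝ)ˣ) : Matrix (Fin p) (Fin p) ℝ)
      = (Sm β M)⁻¹ from by
    rw [← Ring.inverse_unit hU.unit, IsUnit.unit_spec, ← Matrix.nonsing_inv_eq_ringInverse]]

/-- det as a continuous multilinear map in the rows. -/
def detCM (p : ℕ) : ContinuousMultilinearMap ℝ (fun _ : Fin p => (Fin p → ℝ)) ℝ :=
  { (Matrix.detRowAlternating : AlternatingMap ℝ (Fin p → ℝ) ℝ (Fin p)).toMultilinearMap with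
    cont := by
      have : Continuous fun v : Fin p → Fin p → ℝ => (Matrix.of v).det :=
        Continuous.matrix_det continuous_id
      exact this }

theorem hasFDerivAt_det (A : Matrix (Fin p) (Fin p) ℝ) :
    HasFDerivAt Matrix.det
      (((detCM p).linearDeriv ((pEquiv p).symm A)).comp
        ((pEquiv p).symm : Matrix (Fin p) (Fin p) ℝ →L[ℝ] (Fin p → Fin p → ℝ))) A := by
  have h := ((detCM p).hasFDerivAt ((pEquiv p).symm A)).comp A ((pEquiv p).symm.hasFDerivAt)
  exact h

theorem detDeriv_apply (A K : Matrix (Fin p) (Fin p) ℝ) :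
    (((detCM p).linearDeriv ((pEquiv p).symm A)).comp
        ((pEquiv p).symm : Matrix (Fin p) (Fin p) ℝ →L[ℝ] (Fin p → Fin p → ℝ))) K
      = Matrix.trace (A.adjugate * K) := by
  simp only [ContinuousLinearMap.coe_comp', Function.comp_apply,
    ContinuousLinearEquiv.coe_coe]
  have : ((detCM p).linearDeriv ((pEquiv p).symm A)) ((pEquiv p).symm K)
      = ∑ i, (A.updateRow i (K i)).det := by
    rw [ContinuousMultilinearMap.linearDeriv_apply]
    rfl
  rw [this]
  have h2 : ∀ i, (A.updateRow i (K i)).det = Matrix.cramer Aᵀ (K i) i := fun i =>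
    (Matrix.cramer_transpose_apply A (K i) i).symm
  simp only [h2, Matrix.cramer_eq_adjugate_mulVec, Matrix.adjugate_transpose]
  simp only [← Matrix.adjugate_transpose]
  simp [Matrix.mulVec, dotProduct, Matrix.trace, Matrix.diag, Matrix.mul_apply,
    Matrix.transpose_apply, mul_comm]
  exact Finset.sum_comm


def detD (A : Matrix (Fin p) (Fin p) ℝ) : Matrix (Fin p) (Fin p) ℝ →L[ℝ] ℝ :=
  ((detCM p).linearDeriv ((pEquiv p).symm A)).comp
    ((pEquiv p).symm : Matrix (Fin p) (Fin p) ℝ →L[ℝ] (Fin p → Fin p → ℝ))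

theorem detD_apply (A K : Matrix (Fin p) (Fin p) ℝ) :
    detD A K = Matrix.trace (A.adjugate * K) := detDeriv_apply A K

theorem adjugate_Sm {β : ℝ} (hβ : 0 < β) (M : Fin n → Fin p → ℝ) :
    (Sm β M).adjugate = (Sm β M).det • (Sm β M)⁻¹ := by
  rw [Matrix.inv_def, smul_smul, Ring.inverse_eq_inv', mul_inv_cancel₀ (Sm_det_pos hβ M).ne',
    one_smul]

theorem trace_mul_single (X : Matrix (Fin p) (Fin n) ℝ) (a : Fin n) (j : Fin p) :
    Matrix.trace (X * Matrix.of (Pi.single a (Pi.single j (1 : ℝ)))) = X j a := by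
  simp [Matrix.trace, Matrix.diag, Matrix.mul_apply, Pi.single_apply, ite_and,
    Finset.sum_ite_eq', mul_ite, ite_apply]

theorem hasFDerivAt_detPow {β : ℝ} (hβ : 0 < β) (r : ℝ) (M : Fin n → Fin p → ℝ) :
    HasFDerivAt (fun M : Fin n → Fin p → ℝ => (Sm β M).det ^ r)
      ((r * (Sm β M).det ^ (r - 1)) • ((detD (Sm β M)).comp (SD M))) M := by
  have h1 := (hasFDerivAt_det (Sm β M)).comp M (hasFDerivAt_Sm β M)
  have h3 : HasDerivAt (fun t : ℝ => t ^ r) (r * (Sm β M).det ^ (r - 1)) ((Sm β M).det) :=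
    Real.hasDerivAt_rpow_const (Or.inl (Sm_det_pos hβ M).ne')
  exact h3.comp_hasFDerivAt M h1

theorem pdval_detPow {β : ℝ} (hβ : 0 < β) (r : ℝ) (M : Fin n → Fin p → ℝ)
    (a : Fin n) (j : Fin p) :
    ((r * (Sm β M).det ^ (r - 1)) • ((detD (Sm β M)).comp (SD M)))
        (Pi.single a (Pi.single j 1))
      = 2 * r * (Sm β M).det ^ r * ((Matrix.of M * (Sm β M)⁻¹) a j) := by
  have hd := Sm_det_pos hβ M
  set S := Sm β M with hS
  set e : Matrix (Fin n) (Fin p) ℝ := Matrix.of (Pi.single a (Pi.single j 1)) with he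
  have h0 : SD M (Pi.single a (Pi.single j 1)) = eᵀ * Matrix.of M + (Matrix.of M)ᵀ * e := rfl
  have htr : Matrix.trace (S.adjugate * (SD M (Pi.single a (Pi.single j 1))))
      = 2 * (S.det * ((Matrix.of M * S⁻¹) a j)) := by
    rw [h0, Matrix.mul_add, Matrix.trace_add]
    have hsymm : S.adjugateᵀ = S.adjugate := by
      rw [Matrix.adjugate_transpose, Sm_transpose hβ M]
    have h1 : Matrix.trace (S.adjugate * (eᵀ * Matrix.of M))
        = Matrix.trace (S.adjugate * ((Matrix.of M)ᵀ * e)) := by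
      rw [← Matrix.trace_transpose]
      rw [show (S.adjugate * (eᵀ * Matrix.of M))ᵀ
          = (Matrix.of M)ᵀ * (e * S.adjugate) from by
        rw [Matrix.transpose_mul, Matrix.transpose_mul, Matrix.transpose_transpose, hsymm,
          Matrix.mul_assoc]]
      rw [← Matrix.mul_assoc, Matrix.trace_mul_comm]
    rw [h1]
    have h2 : Matrix.trace (S.adjugate * ((Matrix.of M)ᵀ * e))
        = (S.adjugate * (Matrix.of M)ᵀ) j a := by
      rw [← Matrix.mul_assoc, he, trace_mul_single]
    rw [h2, adjugate_Sm hβ M]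
    have h3 : ((S.det • S⁻¹) * (Matrix.of M)ᵀ) j a = S.det * ((S⁻¹ * (Matrix.of M)ᵀ) j a) := by
      rw [Matrix.smul_mul]; rfl
    rw [h3]
    have h4 : (S⁻¹ * (Matrix.of M)ᵀ) j a = (Matrix.of M * S⁻¹) a j := by
      have : (Matrix.of M * S⁻¹)ᵀ = S⁻¹ * (Matrix.of M)ᵀ := by
        rw [Matrix.transpose_mul, Matrix.transpose_nonsing_inv, Sm_transpose hβ M]
      rw [← this]; rfl
    rw [h4]; ring
  rw [ContinuousLinearMap.smul_apply, ContinuousLinearMap.coe_comp', Function.comp_apply,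
    detD_apply, htr]
  have h5 : S.det ^ (r - 1) = S.det ^ r / S.det := by
    rw [Real.rpow_sub hd, Real.rpow_one]
  rw [h5, smul_eq_mul]
  field_simp

theorem entry_E1 (B D : Matrix (Fin n) (Fin p) ℝ) (a : Fin n) (i : Fin p) (a' : Fin n)
    (j : Fin p) :
    (B * (Matrix.of (Pi.single a (Pi.single i (1:ℝ))))ᵀ * D) a' j = B a' i * D a j := by
  simp [Matrix.mul_apply, Pi.single_apply, ite_and, mul_ite, ite_apply,
    Finset.sum_ite_eq', Finset.mul_sum, Finset.sum_mul]

theorem entry_E2 (C : Matrix (Fin n) (Fin n) ℝ) (W : Matrix (Fin p) (Fin p) ℝ)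
    (a : Fin n) (i : Fin p) (b : Fin n) (j : Fin p) :
    (C * (Matrix.of (Pi.single a (Pi.single i (1:ℝ)))) * W) b j = C b a * W i j := by
  simp [Matrix.mul_apply, Pi.single_apply, ite_and, mul_ite, ite_apply,
    Finset.sum_ite_eq', Finset.mul_sum, Finset.sum_mul]

theorem MinvDe {β : ℝ} (hβ : 0 < β) (M : Fin n → Fin p → ℝ) (a : Fin n) (i j : Fin p) :
    (Matrix.of M * invD β M (Pi.single a (Pi.single i 1))) a j
      = -( (Matrix.of M * (Sm β M)⁻¹) a i * (Matrix.of M * (Sm β M)⁻¹) a j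
          + (Matrix.of M * (Sm β M)⁻¹ * (Matrix.of M)ᵀ) a a * (Sm β M)⁻¹ i j ) := by
  set W := (Sm β M)⁻¹ with hW
  set e : Matrix (Fin n) (Fin p) ℝ := Matrix.of (Pi.single a (Pi.single i 1)) with he
  have h0 : invD β M (Pi.single a (Pi.single i 1)) = -(W * (eᵀ * Matrix.of M + (Matrix.of M)ᵀ * e) * W) :=
    invD_apply β M _
  rw [h0]
  have hexp : Matrix.of M * -(W * (eᵀ * Matrix.of M + (Matrix.of M)ᵀ * e) * W)
      = -((Matrix.of M * W) * eᵀ * (Matrix.of M * W)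
          + (Matrix.of M * W * (Matrix.of M)ᵀ) * e * W) := by
    rw [Matrix.mul_neg]
    congr 1
    simp only [Matrix.mul_add, Matrix.add_mul, Matrix.mul_assoc]
  rw [hexp]
  rw [show (-((Matrix.of M * W) * eᵀ * (Matrix.of M * W)
      + (Matrix.of M * W * (Matrix.of M)ᵀ) * e * W)) a j
      = -(((Matrix.of M * W) * eᵀ * (Matrix.of M * W)) a j
        + ((Matrix.of M * W * (Matrix.of M)ᵀ) * e * W) a j) from rfl]
  rw [entry_E1, entry_E2]

theorem hasFDerivAt_G {β : ℝ} (hβ : 0 < β) (r : ℝ) (a : Fin n) (j : Fin p)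
    (M : Fin n → Fin p → ℝ) :
    HasFDerivAt
      (fun M : Fin n → Fin p → ℝ =>
        2 * r * (Sm β M).det ^ r * ((Matrix.of M * (Sm β M)⁻¹) a j))
      ((2 * r) • ((Sm β M).det ^ r •
          (∑ k, (M a k • ((eprj k j).comp (invD β M)) + ((Sm β M)⁻¹ k j) • prj a k))
        + ((Matrix.of M * (Sm β M)⁻¹) a j) •
            ((r * (Sm β M).det ^ (r - 1)) • ((detD (Sm β M)).comp (SD M))))) M := by
  have hv : HasFDerivAt (fun M : Fin n → Fin p → ℝ => (Matrix.of M * (Sm β M)⁻¹) a j)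
      (∑ k, (M a k • ((eprj k j).comp (invD β M)) + ((Sm β M)⁻¹ k j) • prj a k)) M := by
    have hfun : (fun M : Fin n → Fin p → ℝ => (Matrix.of M * (Sm β M)⁻¹) a j)
        = fun M => ∑ k, prj a k M * eprj k j ((Sm β M)⁻¹) := by
      funext M
      simp only [Matrix.mul_apply, prj_apply, eprj_apply]
      rfl
    rw [hfun]
    apply HasFDerivAt.fun_sum
    intro k _
    exact ((prj a k).hasFDerivAt.mul
      (((eprj k j).hasFDerivAt).comp M (hasFDerivAt_inv_Sm hβ M)))
  have hu := hasFDerivAt_detPow hβ r M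
  have h := (hu.mul hv).const_mul (2 * r)
  refine h.congr_of_eventuallyEq (Filter.Eventually.of_forall fun M => ?_)
  simp only [Pi.mul_apply]; ring

theorem pdval_G {β : ℝ} (hβ : 0 < β) (r : ℝ) (M : Fin n → Fin p → ℝ)
    (a : Fin n) (i j : Fin p) :
    ((2 * r) • ((Sm β M).det ^ r •
          (∑ k, (M a k • ((eprj k j).comp (invD β M)) + ((Sm β M)⁻¹ k j) • prj a k))
        + ((Matrix.of M * (Sm β M)⁻¹) a j) •
            ((r * (Sm β M).det ^ (r - 1)) • ((detD (Sm β M)).comp (SD M)))))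
        (Pi.single a (Pi.single i 1))
      = 2 * r * (Sm β M).det ^ r
          * ((Sm β M)⁻¹ i j
            - ((Matrix.of M * (Sm β M)⁻¹) a i * (Matrix.of M * (Sm β M)⁻¹) a j
              + (Matrix.of M * (Sm β M)⁻¹ * (Matrix.of M)ᵀ) a a * (Sm β M)⁻¹ i j)
            + 2 * r * ((Matrix.of M * (Sm β M)⁻¹) a i * (Matrix.of M * (Sm β M)⁻¹) a j)) := by
  have hsum : (∑ k, (M a k • ((eprj k j).comp (invD β M)) + ((Sm β M)⁻¹ k j) • prj a k))
        (Pi.single a (Pi.single i 1))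
      = (Matrix.of M * invD β M (Pi.single a (Pi.single i 1))) a j + (Sm β M)⁻¹ i j := by
    rw [ContinuousLinearMap.sum_apply]
    simp only [ContinuousLinearMap.add_apply, ContinuousLinearMap.coe_smul', Pi.smul_apply,
      ContinuousLinearMap.coe_comp', Function.comp_apply, eprj_apply, prj_apply, smul_eq_mul]
    rw [Finset.sum_add_distrib]
    congr 1
    simp [Pi.single_apply, Finset.sum_ite_eq', mul_ite]
  rw [ContinuousLinearMap.smul_apply, ContinuousLinearMap.add_apply,
    ContinuousLinearMap.smul_apply, ContinuousLinearMap.smul_apply, hsum,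
    pdval_detPow hβ r M a i, MinvDe hβ M a i j]
  simp only [smul_eq_mul]
  ring

theorem sum_MW_MW {β : ℝ} (hβ : 0 < β) (M : Fin n → Fin p → ℝ) (i j : Fin p) :
    ∑ a, (Matrix.of M * (Sm β M)⁻¹) a i * (Matrix.of M * (Sm β M)⁻¹) a j
      = (Sm β M)⁻¹ i j - β * ((Sm β M)⁻¹ * (Sm β M)⁻¹) i j := by
  set W := (Sm β M)⁻¹ with hW
  have h1 : ∑ a, (Matrix.of M * W) a i * (Matrix.of M * W) a j
      = ((Matrix.of M * W)ᵀ * (Matrix.of M * W)) i j := by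
    rw [Matrix.mul_apply]
    exact Finset.sum_congr rfl fun a _ => by rw [Matrix.transpose_apply]
  have hWt : Wᵀ = W := by
    rw [hW, Matrix.transpose_nonsing_inv, Sm_transpose hβ M]
  have h2 : (Matrix.of M * W)ᵀ * (Matrix.of M * W) = W * ((Matrix.of M)ᵀ * Matrix.of M) * W := by
    rw [Matrix.transpose_mul, hWt, Matrix.mul_assoc, Matrix.mul_assoc, Matrix.mul_assoc]
  have h3 : (Matrix.of M)ᵀ * Matrix.of M = Sm β M - β • 1 := by
    rw [Sm]; abel
  have h4 : W * (Sm β M - β • 1) * W = W - β • (W * W) := by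
    rw [Matrix.mul_sub, Matrix.sub_mul, Matrix.nonsing_inv_mul _
      (isUnit_iff_ne_zero.mpr (Sm_det_pos hβ M).ne'), one_mul,
      Matrix.mul_smul, Matrix.mul_one, Matrix.smul_mul]
  rw [h1, h2, h3, h4, Matrix.sub_apply, Matrix.smul_apply, smul_eq_mul]

theorem sum_diag_MWMt {β : ℝ} (hβ : 0 < β) (M : Fin n → Fin p → ℝ) :
    ∑ a, (Matrix.of M * (Sm β M)⁻¹ * (Matrix.of M)ᵀ) a a
      = p - β * Matrix.trace (Sm β M)⁻¹ := by
  set W := (Sm β M)⁻¹ with hW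
  have h1 : ∑ a, (Matrix.of M * W * (Matrix.of M)ᵀ) a a
      = Matrix.trace (Matrix.of M * W * (Matrix.of M)ᵀ) := rfl
  rw [h1, Matrix.trace_mul_cycle]
  have h3 : (Matrix.of M)ᵀ * Matrix.of M = Sm β M - β • 1 := by
    rw [Sm]; abel
  rw [h3, Matrix.sub_mul, Matrix.mul_nonsing_inv _
    (isUnit_iff_ne_zero.mpr (Sm_det_pos hβ M).ne'), Matrix.smul_mul, one_mul,
    Matrix.trace_sub, Matrix.trace_one, Matrix.trace_smul]
  simp

theorem posSemidef_smul_nonneg {A : Matrix (Fin p) (Fin p) ℝ} (hA : A.PosSemidef)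
    {c : ℝ} (hc : 0 ≤ c) : (c • A).PosSemidef := by
  refine .of_dotProduct_mulVec_nonneg ?_ fun x => ?_
  · rw [Matrix.IsHermitian, Matrix.conjTranspose_smul, hA.1.eq]
    simp
  · rw [Matrix.smul_mulVec, dotProduct_smul, smul_eq_mul]
    exact mul_nonneg hc (hA.dotProduct_mulVec_nonneg x)

theorem trace_nonneg_of_posSemidef {W : Matrix (Fin p) (Fin p) ℝ} (h : W.PosSemidef) :
    0 ≤ W.trace := by
  have hd : ∀ i, 0 ≤ W i i := fun i => by
    have h2 := h.dotProduct_mulVec_nonneg (Pi.single i 1)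
    simpa [dotProduct, Matrix.mulVec, Pi.single_apply, Finset.sum_ite_eq',
      mul_ite, ite_and] using h2
  exact Finset.sum_nonneg fun i _ => hd i

end Aux

/-- for `−n−p+1 ≤ α ≤ −2p` and `β > 0`, the matrix Laplacian of
`f(M) = det(MᵀM + βI_p)^{-(α+n+p−1)/2}` equals
`((α+n+p−1)/2) det(S)^{-(α+n+p−1)/2} (2(α+2p) S⁻¹ − 2(α+n+p)β (S⁻¹)² − 2β tr(S⁻¹) S⁻¹)`
with `S = MᵀM + βI_p`, and this matrix is negative semidefinite for every `M`. -/
theorem matLap_detPow {n p : ℕ} (hn : 0 < n) (hp : 0 < p) (α β : ℝ)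
    (hα1 : -(n : ℝ) - p + 1 ≤ α) (hα2 : α ≤ -2 * p) (hβ : 0 < β)
    (M : Fin n → Fin p → ℝ) :
    matLap (detPow α β) M
        = ((α + n + p - 1) / 2
            * Matrix.det ((Matrix.of M)ᵀ * Matrix.of M
                + β • (1 : Matrix (Fin p) (Fin p) ℝ)) ^ (-(α + n + p - 1) / 2)) •
          ((2 * (α + 2 * p)) • ((Matrix.of M)ᵀ * Matrix.of M
                + β • (1 : Matrix (Fin p) (Fin p) ℝ))⁻¹
            - (2 * (α + n + p) * β) • (((Matrix.of M)ᵀ * Matrix.of M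
                + β • (1 : Matrix (Fin p) (Fin p) ℝ))⁻¹
              * ((Matrix.of M)ᵀ * Matrix.of M
                + β • (1 : Matrix (Fin p) (Fin p) ℝ))⁻¹)
            - (2 * β * Matrix.trace ((Matrix.of M)ᵀ * Matrix.of M
                + β • (1 : Matrix (Fin p) (Fin p) ℝ))⁻¹) • ((Matrix.of M)ᵀ * Matrix.of M
                + β • (1 : Matrix (Fin p) (Fin p) ℝ))⁻¹)
    ∧ (-(matLap (detPow α β) M)).PosSemidef := by
  have hSm : Sm β M = (Matrix.of M)ᵀ * Matrix.of M + β • (1 : Matrix (Fin p) (Fin p) ℝ) := rfl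
  rw [← hSm]
  have hq0 : (0:ℝ) ≤ (α + n + p - 1) / 2 := by
    have hn1 : (1:ℝ) ≤ (n:ℝ) := by exact_mod_cast hn
    have hp0 : (0:ℝ) ≤ (p:ℝ) := Nat.cast_nonneg p
    linarith
  have hnp1 : (1:ℝ) ≤ α + (n:ℝ) + (p:ℝ) := by linarith
  have hp1 : (1:ℝ) ≤ (p:ℝ) := by exact_mod_cast hp
  set r : ℝ := -(α + (n:ℝ) + (p:ℝ) - 1) / 2 with hr
  have hdet := Sm_det_pos (n := n) (p := p) hβ M
  have h1 : ∀ (a : Fin n) (j : Fin p), pd a j (detPow α β)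
      = fun X : Fin n → Fin p → ℝ =>
          2 * r * (Sm β X).det ^ r * ((Matrix.of X * (Sm β X)⁻¹) a j) := by
    intro a j
    funext X
    show fderiv ℝ (detPow α β) X (Pi.single a (Pi.single j 1)) = _
    have hfun : detPow α β = fun M : Fin n → Fin p → ℝ => (Sm β M).det ^ r := rfl
    rw [hfun, (hasFDerivAt_detPow hβ r X).fderiv, pdval_detPow hβ r X a j]
  have h2 : ∀ (a : Fin n) (i j : Fin p),
      pd a i (pd a j (detPow α β)) M
        = 2 * r * (Sm β M).det ^ r
            * ((Sm β M)⁻¹ i j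
              - ((Matrix.of M * (Sm β M)⁻¹) a i * (Matrix.of M * (Sm β M)⁻¹) a j
                + (Matrix.of M * (Sm β M)⁻¹ * (Matrix.of M)ᵀ) a a * (Sm β M)⁻¹ i j)
              + 2 * r * ((Matrix.of M * (Sm β M)⁻¹) a i
                  * (Matrix.of M * (Sm β M)⁻¹) a j)) := by
    intro a i j
    rw [h1 a j]
    show fderiv ℝ _ M (Pi.single a (Pi.single i 1)) = _
    rw [(hasFDerivAt_G hβ r a j M).fderiv, pdval_G hβ r M a i j]
  have hmain : matLap (detPow α β) M
      = ((α + n + p - 1) / 2 * (Sm β M).det ^ r) •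
          ((2 * (α + 2 * p)) • (Sm β M)⁻¹
            - (2 * (α + n + p) * β) • ((Sm β M)⁻¹ * (Sm β M)⁻¹)
            - (2 * β * Matrix.trace (Sm β M)⁻¹) • (Sm β M)⁻¹) := by
    ext i j
    show (∑ a, pd a i (pd a j (detPow α β)) M) = _
    simp only [h2]
    rw [← Finset.mul_sum]
    have hs1 := sum_MW_MW hβ M i j
    have hs2 := sum_diag_MWMt hβ M
    have hsum : ∑ a : Fin n,
        ((Sm β M)⁻¹ i j
          - ((Matrix.of M * (Sm β M)⁻¹) a i * (Matrix.of M * (Sm β M)⁻¹) a j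
            + (Matrix.of M * (Sm β M)⁻¹ * (Matrix.of M)ᵀ) a a * (Sm β M)⁻¹ i j)
          + 2 * r * ((Matrix.of M * (Sm β M)⁻¹) a i * (Matrix.of M * (Sm β M)⁻¹) a j))
        = (n : ℝ) * (Sm β M)⁻¹ i j
          - (((Sm β M)⁻¹ i j - β * ((Sm β M)⁻¹ * (Sm β M)⁻¹) i j)
             + ((p : ℝ) - β * Matrix.trace (Sm β M)⁻¹) * (Sm β M)⁻¹ i j)
          + 2 * r * ((Sm β M)⁻¹ i j - β * ((Sm β M)⁻¹ * (Sm β M)⁻¹) i j) := by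
      rw [Finset.sum_add_distrib, Finset.sum_sub_distrib, Finset.sum_add_distrib,
        Finset.sum_const, ← Finset.sum_mul, ← Finset.mul_sum, hs1, hs2]
      simp [nsmul_eq_mul]
    rw [hsum]
    simp only [Matrix.smul_apply, Matrix.sub_apply, smul_eq_mul]
    rw [hr]
    ring
  refine ⟨hmain, ?_⟩
  rw [hmain]
  have hWpsd : ((Sm β M)⁻¹).PosSemidef := ((Sm_posDef hβ M).inv).posSemidef
  have hWt : ((Sm β M)⁻¹)ᵀ = (Sm β M)⁻¹ := by
    rw [Matrix.transpose_nonsing_inv, Sm_transpose hβ M]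
  have hW2 : ((Sm β M)⁻¹ * (Sm β M)⁻¹).PosSemidef := by
    have h := Matrix.posSemidef_conjTranspose_mul_self ((Sm β M)⁻¹)
    rwa [Matrix.conjTranspose_eq_transpose_of_trivial, hWt] at h
  have htr : 0 ≤ Matrix.trace (Sm β M)⁻¹ := trace_nonneg_of_posSemidef hWpsd
  have hrw : -(((α + ↑n + ↑p - 1) / 2 * (Sm β M).det ^ r) •
        ((2 * (α + 2 * ↑p)) • (Sm β M)⁻¹
          - (2 * (α + ↑n + ↑p) * β) • ((Sm β M)⁻¹ * (Sm β M)⁻¹)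
          - (2 * β * Matrix.trace (Sm β M)⁻¹) • (Sm β M)⁻¹))
      = ((α + ↑n + ↑p - 1) / 2 * (Sm β M).det ^ r) •
          (((2 * (α + ↑n + ↑p) * β) • ((Sm β M)⁻¹ * (Sm β M)⁻¹)
            + (2 * β * Matrix.trace (Sm β M)⁻¹) • (Sm β M)⁻¹)
           + (-(2 * (α + 2 * ↑p))) • (Sm β M)⁻¹) := by
    ext i j
    simp only [Matrix.neg_apply, Matrix.smul_apply, Matrix.sub_apply, Matrix.add_apply,
      smul_eq_mul]
    ring
  rw [hrw]
  apply posSemidef_smul_nonneg _ (mul_nonneg hq0 (Real.rpow_nonneg hdet.le _))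
  apply Matrix.PosSemidef.add
  apply Matrix.PosSemidef.add
  · exact posSemidef_smul_nonneg hW2
      (by nlinarith)
  · exact posSemidef_smul_nonneg hWpsd
      (by nlinarith)
  · exact posSemidef_smul_nonneg hWpsd
      (by nlinarith)
end

section
/- Let n − p − 1 > 0 and let M ∈ ℝ^{n×p} have full column rank p. Then the matrix Laplacian of the singular value shrinkage prior π_SVS(M) = det(MᵀM)^{-(n−p−1)/2} vanishes at M: Δ̃π_SVS(M) = O. -/
open MeasureTheory Matrix
open scoped ENNReal

open Matrix

namespace SVSAux
noncomputable section

variable {n p : ℕ}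

/-- coordinate continuous linear map -/
def coord (a : Fin n) (i : Fin p) : (Fin n → Fin p → ℝ) →L[ℝ] ℝ :=
  (ContinuousLinearMap.proj (R := ℝ) (φ := fun _ : Fin p => ℝ) i).comp
    (ContinuousLinearMap.proj (R := ℝ) (φ := fun _ : Fin n => Fin p → ℝ) a)

@[simp] lemma coord_apply (a : Fin n) (i : Fin p) (H : Fin n → Fin p → ℝ) :
    coord a i H = H a i := rfl

def Sf (Y : Fin n → Fin p → ℝ) : Fin p → Fin p → ℝ := fun i j => ∑ a, Y a i * Y a j

lemma of_Sf (Y : Fin n → Fin p → ℝ) :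
    (Matrix.of (Sf Y)) = (Matrix.of Y)ᵀ * Matrix.of Y := by
  ext i j; simp [Sf, Matrix.mul_apply]

/-- the determinant as a continuous multilinear map in the rows -/
noncomputable def detL (p : ℕ) : ContinuousMultilinearMap ℝ (fun _ : Fin p => (Fin p → ℝ)) ℝ :=
  MultilinearMap.mkContinuous
    ((Matrix.detRowAlternating : (Fin p → ℝ) [⋀^Fin p]→ₗ[ℝ] ℝ) :
      MultilinearMap ℝ (fun _ : Fin p => Fin p → ℝ) ℝ)
    (p.factorial) <| by
  intro m
  have h0 : ((Matrix.detRowAlternating : (Fin p → ℝ) [⋀^Fin p]→ₗ[ℝ] ℝ) :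
      MultilinearMap ℝ (fun _ : Fin p => Fin p → ℝ) ℝ) m = Matrix.det (Matrix.of m) := rfl
  rw [h0, Matrix.det_apply, Real.norm_eq_abs]
  calc |∑ σ : Equiv.Perm (Fin p), Equiv.Perm.sign σ • ∏ i, Matrix.of m (σ i) i|
      ≤ ∑ σ : Equiv.Perm (Fin p), |Equiv.Perm.sign σ • ∏ i, Matrix.of m (σ i) i| :=
        Finset.abs_sum_le_sum_abs _ _
    _ ≤ ∑ _σ : Equiv.Perm (Fin p), ∏ i, ‖m i‖ := by
        refine Finset.sum_le_sum fun σ _ => ?_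
        have h1 : |Equiv.Perm.sign σ • ∏ i, Matrix.of m (σ i) i|
            = |∏ i, Matrix.of m (σ i) i| := by
          rcases Int.units_eq_one_or (Equiv.Perm.sign σ) with h | h <;>
            simp [h, Units.smul_def]
        rw [h1, Finset.abs_prod]
        have h2 : ∀ i : Fin p, |Matrix.of m (σ i) i| ≤ ‖m (σ i)‖ := fun i => by
          simpa using norm_le_pi_norm (m (σ i)) i
        calc ∏ i, |Matrix.of m (σ i) i| ≤ ∏ i, ‖m (σ i)‖ :=
              Finset.prod_le_prod (fun i _ => abs_nonneg _) (fun i _ => h2 i)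
          _ = ∏ i, ‖m i‖ := Equiv.prod_comp σ (fun i => ‖m i‖)
    _ = p.factorial * ∏ i, ‖m i‖ := by
        rw [Finset.sum_const, Finset.card_univ, nsmul_eq_mul]
        simp [Fintype.card_perm]

@[simp] lemma detL_apply (A : Fin p → Fin p → ℝ) : detL p A = (Matrix.of A).det := rfl

def dent (Y : Fin n → Fin p → ℝ) (i j : Fin p) : (Fin n → Fin p → ℝ) →L[ℝ] ℝ :=
  ∑ a, (Y a i • coord a j + Y a j • coord a i)

lemma hasFDerivAt_Sf_entry (Y : Fin n → Fin p → ℝ) (i j : Fin p) :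
    HasFDerivAt (fun Y : Fin n → Fin p → ℝ => Sf Y i j) (dent Y i j) Y := by
  unfold Sf dent
  exact HasFDerivAt.fun_sum fun a _ =>
    ((coord a i).hasFDerivAt (x := Y)).mul ((coord a j).hasFDerivAt (x := Y))

def dS (Y : Fin n → Fin p → ℝ) : (Fin n → Fin p → ℝ) →L[ℝ] (Fin p → Fin p → ℝ) :=
  ContinuousLinearMap.pi fun i => ContinuousLinearMap.pi fun j => dent Y i j

@[simp] lemma dS_apply (Y H : Fin n → Fin p → ℝ) (i j : Fin p) :
    dS Y H i j = ∑ a, (Y a i * H a j + Y a j * H a i) := by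
  simp [dS, dent, ContinuousLinearMap.pi_apply, ContinuousLinearMap.sum_apply]

lemma hasFDerivAt_Sf (Y : Fin n → Fin p → ℝ) : HasFDerivAt Sf (dS Y) Y := by
  apply hasFDerivAt_pi''
  intro i
  apply hasFDerivAt_pi''
  intro j
  have h : ((ContinuousLinearMap.proj j).comp
      ((ContinuousLinearMap.proj i).comp (dS Y))) = dent Y i j := by
    ext H
    simp [dS, ContinuousLinearMap.proj_pi]
  rw [h]
  exact hasFDerivAt_Sf_entry Y i j

def Df (Y : Fin n → Fin p → ℝ) : ℝ := detL p (Sf Y)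

def dD (Y : Fin n → Fin p → ℝ) : (Fin n → Fin p → ℝ) →L[ℝ] ℝ :=
  ((detL p).linearDeriv (Sf Y)).comp (dS Y)

lemma hasFDerivAt_Df (Y : Fin n → Fin p → ℝ) : HasFDerivAt Df (dD Y) Y :=
  ((detL p).hasFDerivAt (Sf Y)).comp Y (hasFDerivAt_Sf Y)

lemma dD_eval (Y H : Fin n → Fin p → ℝ) :
    dD Y H = ∑ l, detL p (Function.update (Sf Y) l (dS Y H l)) := by
  simp [dD, ContinuousMultilinearMap.linearDeriv_apply]

@[simp] lemma detL_update (A : Fin p → Fin p → ℝ) (l : Fin p) (w : Fin p → ℝ) :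
    detL p (Function.update A l w) = ((Matrix.of A).updateRow l w).det := rfl

lemma det_updateRow_expand (B : Matrix (Fin p) (Fin p) ℝ) (r : Fin p) (v : Fin p → ℝ) :
    (B.updateRow r v).det = ∑ k, v k * B.adjugate k r := by
  have h1 : (B.updateRow r v).det = Matrix.cramer Bᵀ v r := by
    rw [Matrix.cramer_apply, Matrix.updateCol_transpose, Matrix.det_transpose]
  rw [h1, Matrix.cramer_eq_adjugate_mulVec, Matrix.mulVec, dotProduct]
  refine Finset.sum_congr rfl fun k _ => ?_
  rw [← Matrix.adjugate_transpose, Matrix.transpose_apply, mul_comm]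

lemma Sf_symm (Y : Fin n → Fin p → ℝ) : (Matrix.of (Sf Y))ᵀ = Matrix.of (Sf Y) := by
  ext i j; simp [Sf, mul_comm]

lemma adj_symm (Y : Fin n → Fin p → ℝ) (k j : Fin p) :
    (Matrix.of (Sf Y)).adjugate k j = (Matrix.of (Sf Y)).adjugate j k := by
  have h := Matrix.adjugate_transpose (Matrix.of (Sf Y))
  rw [Sf_symm] at h
  calc (Matrix.of (Sf Y)).adjugate k j = ((Matrix.of (Sf Y)).adjugate)ᵀ j k := rfl
    _ = (Matrix.of (Sf Y)).adjugate j k := by rw [h]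

def Pf (Y : Fin n → Fin p → ℝ) (a : Fin n) (j : Fin p) : ℝ :=
  ∑ k, Y a k * (Matrix.of (Sf Y)).adjugate k j

lemma det_updateRow_zero (B : Matrix (Fin p) (Fin p) ℝ) (l : Fin p) :
    (B.updateRow l (0 : Fin p → ℝ)).det = 0 :=
  Matrix.det_eq_zero_of_row_eq_zero l (fun j => by simp)

lemma dS_single (Y : Fin n → Fin p → ℝ) (a : Fin n) (j : Fin p) (l : Fin p) :
    dS Y (Pi.single a (Pi.single j 1)) l
      = (if l = j then (1:ℝ) else 0) • (Y a) + (Y a l) • (Pi.single j 1 : Fin p → ℝ) := by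
  funext m
  simp [dS_apply, Pi.single_apply, ite_apply, Finset.sum_ite_eq', mul_ite, ite_mul]
  by_cases hm : m = j <;> by_cases hl : l = j <;>
    simp [hm, hl, mul_comm, add_comm, Finset.sum_add_distrib, Finset.sum_ite_eq']

lemma key1 (Y : Fin n → Fin p → ℝ) (a : Fin n) (j : Fin p) :
    dD Y (Pi.single a (Pi.single j 1)) = 2 * Pf Y a j := by
  rw [dD_eval]
  have step : ∀ l, detL p (Function.update (Sf Y) l (dS Y (Pi.single a (Pi.single j 1)) l))
      = (if l = j then ((Matrix.of (Sf Y)).updateRow j (Y a)).det else 0)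
        + Y a l * (Matrix.of (Sf Y)).adjugate j l := by
    intro l
    rw [dS_single, detL_update, Matrix.det_updateRow_add, Matrix.det_updateRow_smul,
      Matrix.det_updateRow_smul]
    congr 1
    · by_cases hl : l = j <;> simp [hl, det_updateRow_zero]
    · congr 1
      rw [Matrix.adjugate_apply]
  simp only [step]
  rw [Finset.sum_add_distrib, Finset.sum_ite_eq' Finset.univ j, if_pos (Finset.mem_univ j)]
  rw [det_updateRow_expand]
  have : ∀ l, Y a l * (Matrix.of (Sf Y)).adjugate j l
      = Y a l * (Matrix.of (Sf Y)).adjugate l j := fun l => by rw [adj_symm]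
  simp only [this]
  unfold Pf; ring

def updL (j : Fin p) : (Fin p → Fin p → ℝ) →ₗ[ℝ] (Fin p → Fin p → ℝ) where
  toFun A := Function.update A j 0
  map_add' A B := by
    funext l; by_cases h : l = j <;> simp [h, Function.update_apply]
  map_smul' r A := by
    funext l; by_cases h : l = j <;> simp [h, Function.update_apply]

def updCLM (j : Fin p) : (Fin p → Fin p → ℝ) →L[ℝ] (Fin p → Fin p → ℝ) :=
  LinearMap.toContinuousLinearMap (updL j)

@[simp] lemma updCLM_apply (j : Fin p) (A : Fin p → Fin p → ℝ) :
    updCLM j A = Function.update A j 0 := rfl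

lemma hasFDerivAt_updateConst (j : Fin p) (w : Fin p → ℝ) (A : Fin p → Fin p → ℝ) :
    HasFDerivAt (fun A : Fin p → Fin p → ℝ => Function.update A j w) (updCLM j) A := by
  have h : (fun A : Fin p → Fin p → ℝ => Function.update A j w)
      = fun A => updCLM j A + Function.update (0 : Fin p → Fin p → ℝ) j w := by
    funext A l; by_cases h : l = j <;> simp [h, Function.update_apply]
  rw [h]
  exact (updCLM j).hasFDerivAt.add_const _

def Ak (j k : Fin p) (Y : Fin n → Fin p → ℝ) : ℝ :=
  detL p (Function.update (Sf Y) j (Pi.single k 1))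

lemma Ak_eq (j k : Fin p) (Y : Fin n → Fin p → ℝ) :
    Ak j k Y = (Matrix.of (Sf Y)).adjugate k j := by
  rw [Ak, detL_update, Matrix.adjugate_apply]

def dAk (j k : Fin p) (Y : Fin n → Fin p → ℝ) : (Fin n → Fin p → ℝ) →L[ℝ] ℝ :=
  (((detL p).linearDeriv (Function.update (Sf Y) j (Pi.single k 1))).comp (updCLM j)).comp (dS Y)

lemma hasFDerivAt_Ak (j k : Fin p) (Y : Fin n → Fin p → ℝ) :
    HasFDerivAt (Ak j k) (dAk j k Y) Y := by
  have h1 : HasFDerivAt (fun A : Fin p → Fin p → ℝ => detL p (Function.update A j (Pi.single k 1)))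
      (((detL p).linearDeriv (Function.update (Sf Y) j (Pi.single k 1))).comp (updCLM j)) (Sf Y) :=
    ((detL p).hasFDerivAt _).comp (Sf Y) (hasFDerivAt_updateConst j _ (Sf Y))
  exact h1.comp Y (hasFDerivAt_Sf Y)

def dP (a : Fin n) (j : Fin p) (Y : Fin n → Fin p → ℝ) : (Fin n → Fin p → ℝ) →L[ℝ] ℝ :=
  ∑ k, (Y a k • dAk j k Y + Ak j k Y • coord a k)

lemma hasFDerivAt_Pf (a : Fin n) (j : Fin p) (Y : Fin n → Fin p → ℝ) :
    HasFDerivAt (fun Y => Pf Y a j) (dP a j Y) Y := by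
  have h : (fun Y : Fin n → Fin p → ℝ => Pf Y a j) = fun Y => ∑ k, Y a k * Ak j k Y := by
    funext Y; unfold Pf; exact Finset.sum_congr rfl fun k _ => by rw [Ak_eq]
  rw [h]
  exact HasFDerivAt.fun_sum fun k _ =>
    ((coord a k).hasFDerivAt (x := Y)).mul (hasFDerivAt_Ak j k Y)

def f₀ (n p : ℕ) (c : ℝ) : (Fin n → Fin p → ℝ) → ℝ := fun Y => Df Y ^ c

lemma hasFDerivAt_f₀ (c : ℝ) (Y : Fin n → Fin p → ℝ) (hY : Df Y ≠ 0) :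
    HasFDerivAt (f₀ n p c) ((c * Df Y ^ (c - 1)) • dD Y) Y :=
  (hasFDerivAt_Df Y).rpow_const (Or.inl hY)

def phi (c : ℝ) (a : Fin n) (j : Fin p) : (Fin n → Fin p → ℝ) → ℝ :=
  fun Y => (2 * c) * (Df Y ^ (c - 1) * Pf Y a j)

lemma pd_f₀ (c : ℝ) (a : Fin n) (j : Fin p) (Y : Fin n → Fin p → ℝ) (hY : Df Y ≠ 0) :
    pd a j (f₀ n p c) Y = phi c a j Y := by
  unfold pd
  rw [(hasFDerivAt_f₀ c Y hY).fderiv]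
  rw [ContinuousLinearMap.smul_apply, key1]
  unfold phi; rw [smul_eq_mul]; ring

lemma hasFDerivAt_phi (c : ℝ) (a : Fin n) (j : Fin p) (Y : Fin n → Fin p → ℝ) (hY : Df Y ≠ 0) :
    HasFDerivAt (phi c a j)
      ((2 * c) • (Df Y ^ (c - 1) • dP a j Y
        + Pf Y a j • (((c - 1) * Df Y ^ (c - 1 - 1)) • dD Y))) Y := by
  have h2 : HasFDerivAt (fun Y : Fin n → Fin p → ℝ => Df Y ^ (c - 1))
      (((c - 1) * Df Y ^ (c - 1 - 1)) • dD Y) Y :=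
    (hasFDerivAt_Df Y).rpow_const (Or.inl hY)
  exact ((h2.mul (hasFDerivAt_Pf a j Y)).const_mul (2 * c))

lemma one_row (r : Fin p) :
    (1 : Matrix (Fin p) (Fin p) ℝ) r = Pi.single r (1:ℝ) := by
  funext c; simp [Matrix.one_apply, Pi.single_apply, eq_comm]

lemma det_double_update_one_single {j l : Fin p} (hjl : j ≠ l) (k m : Fin p) :
    (((1 : Matrix (Fin p) (Fin p) ℝ).updateRow j (Pi.single k 1)).updateRow l
        (Pi.single m 1)).det
      = (if k = j then (1:ℝ) else 0) * (if m = l then 1 else 0)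
        - (if k = l then 1 else 0) * (if m = j then 1 else 0) := by
  set N := ((1 : Matrix (Fin p) (Fin p) ℝ).updateRow j (Pi.single k 1)).updateRow l
      (Pi.single m 1) with hN
  have hrow_l : N l = Pi.single m 1 := Matrix.updateRow_self
  have hrow_j : N j = Pi.single k 1 := by
    rw [hN, Matrix.updateRow_ne hjl, Matrix.updateRow_self]
  have hrow : ∀ r, r ≠ j → r ≠ l → N r = Pi.single r 1 := by
    intro r h1 h2
    rw [hN, Matrix.updateRow_ne h2, Matrix.updateRow_ne h1, one_row]
  by_cases hk : k = j
  · by_cases hm : m = l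
    · have h1 : N = 1 := by
        funext r
        by_cases h1 : r = j
        · rw [h1, hrow_j, one_row, hk]
        · by_cases h2 : r = l
          · rw [h2, hrow_l, one_row, hm]
          · rw [hrow r h1 h2, one_row]
      have hkl : ¬ k = l := by rw [hk]; exact hjl
      rw [h1]
      simp [hk, hm, hkl, hjl, Ne.symm hjl]
    · have hdet : N.det = 0 := by
        by_cases hmj : m = j
        · exact Matrix.det_zero_of_row_eq hjl (by rw [hrow_j, hrow_l, hmj, hk])
        · exact Matrix.det_zero_of_row_eq (show m ≠ l from hm)
            (by rw [hrow m hmj hm, hrow_l])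
      rw [hdet]
      simp [hm]
      intro _
      rw [hk]
      exact hjl
  · by_cases hkl : k = l
    · by_cases hmj : m = j
      · have hNs : N = (1 : Matrix (Fin p) (Fin p) ℝ).submatrix (Equiv.swap j l) id := by
          funext r
          by_cases h1 : r = j
          · rw [h1, hrow_j]; funext c
            rw [Matrix.submatrix_apply, Equiv.swap_apply_left]
            simp [Matrix.one_apply, Pi.single_apply, hkl, eq_comm]
          · by_cases h2 : r = l
            · rw [h2, hrow_l]; funext c
              rw [Matrix.submatrix_apply, Equiv.swap_apply_right]
              simp [Matrix.one_apply, Pi.single_apply, hmj, eq_comm]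
            · rw [hrow r h1 h2]; funext c
              rw [Matrix.submatrix_apply, Equiv.swap_apply_of_ne_of_ne h1 h2]
              simp [Matrix.one_apply, Pi.single_apply, eq_comm]
        rw [hNs, Matrix.det_permute, Equiv.Perm.sign_swap hjl]
        simp [hk, hkl, hmj, hjl]
      · have hdet : N.det = 0 := by
          by_cases hml : m = l
          · exact Matrix.det_zero_of_row_eq hjl (by rw [hrow_j, hrow_l, hkl, hml])
          · exact Matrix.det_zero_of_row_eq (show m ≠ l from hml)
              (by rw [hrow m hmj hml, hrow_l])
        rw [hdet]
        simp [hk, hmj]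
    · have hdet : N.det = 0 :=
        Matrix.det_zero_of_row_eq (Ne.symm (show k ≠ j from hk))
          (by rw [hrow k hk hkl, hrow_j])
      rw [hdet]
      simp [hk, hkl]

lemma updateRow_swap (B : Matrix (Fin p) (Fin p) ℝ) {j l : Fin p} (hjl : j ≠ l)
    (x y : Fin p → ℝ) :
    (B.updateRow j x).updateRow l y = (B.updateRow l y).updateRow j x := by
  ext r c
  by_cases hr : r = l <;> by_cases hr2 : r = j <;>
    simp_all [Matrix.updateRow_apply]

lemma det2 {j l : Fin p} (hjl : j ≠ l) (x y : Fin p → ℝ) :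
    (((1 : Matrix (Fin p) (Fin p) ℝ).updateRow j x).updateRow l y).det
      = x j * y l - x l * y j := by
  rw [det_updateRow_expand]
  have step : ∀ m, ((1 : Matrix (Fin p) (Fin p) ℝ).updateRow j x).adjugate m l
      = ∑ k, x k * ((((1 : Matrix (Fin p) (Fin p) ℝ).updateRow j (Pi.single k 1)).updateRow l
          (Pi.single m 1)).det) := by
    intro m
    rw [Matrix.adjugate_apply, updateRow_swap _ hjl, det_updateRow_expand]
    refine Finset.sum_congr rfl fun k _ => ?_
    congr 1
    rw [Matrix.adjugate_apply, updateRow_swap _ (Ne.symm hjl)]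
  simp only [step, det_double_update_one_single hjl]
  simp only [mul_sub, mul_ite, ite_mul, mul_one, mul_zero, zero_mul, one_mul,
    Finset.sum_sub_distrib, Finset.mul_sum, Finset.sum_ite_eq', Finset.mem_univ,
    if_true, mul_comm]
  simp only [ite_self]
  rw [Finset.sum_comm]
  simp only [Finset.sum_ite_eq', Finset.mem_univ, if_true]
  rw [Finset.sum_comm]
  simp only [Finset.sum_ite_eq', Finset.mem_univ, if_true]

lemma Gform (S : Matrix (Fin p) (Fin p) ℝ) (hu : IsUnit S.det) {j l : Fin p}
    (hjl : j ≠ l) (k m : Fin p) :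
    ((S.updateRow j (Pi.single k 1)).updateRow l (Pi.single m 1)).det
      = (S.adjugate k j * S.adjugate m l - S.adjugate k l * S.adjugate m j) / S.det := by
  have hd : S.det ≠ 0 := hu.ne_zero
  have hinv : ∀ x y : Fin p, S⁻¹ x y = (S.det)⁻¹ * S.adjugate x y := by
    intro x y
    rw [Matrix.inv_def, Matrix.smul_apply, smul_eq_mul, Ring.inverse_eq_inv']
  have hV : (((1 : Matrix (Fin p) (Fin p) ℝ).updateRow j (S⁻¹ k)).updateRow l (S⁻¹ m)) * S
      = (S.updateRow j (Pi.single k 1)).updateRow l (Pi.single m 1) := by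
    ext r c
    rw [Matrix.mul_apply]
    by_cases hr : r = l
    · subst hr
      simp only [Matrix.updateRow_self]
      have : ∑ t, S⁻¹ m t * S t c = (S⁻¹ * S) m c := (Matrix.mul_apply).symm
      rw [this, Matrix.nonsing_inv_mul S hu]
      simp [Matrix.one_apply, Pi.single_apply, eq_comm]
    · by_cases hr2 : r = j
      · subst hr2
        simp only [Matrix.updateRow_ne hr, Matrix.updateRow_self]
        have : ∑ t, S⁻¹ k t * S t c = (S⁻¹ * S) k c := (Matrix.mul_apply).symm
        rw [this, Matrix.nonsing_inv_mul S hu]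
        simp [Matrix.one_apply, Pi.single_apply, eq_comm]
      · simp only [Matrix.updateRow_ne hr, Matrix.updateRow_ne hr2]
        simp [Matrix.one_apply, ite_mul, Finset.sum_ite_eq]
  rw [← hV, Matrix.det_mul, det2 hjl]
  simp only [hinv]
  field_simp

def Gv (Y : Fin n → Fin p → ℝ) (j k l m : Fin p) : ℝ :=
  (((Matrix.of (Sf Y)).updateRow j (Pi.single k 1)).updateRow l (Pi.single m 1)).det

lemma dAk_single (a : Fin n) (i j k : Fin p) (Y : Fin n → Fin p → ℝ) :
    dAk j k Y (Pi.single a (Pi.single i 1))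
      = ∑ l, (if l = j then 0 else
          (Y a l * Gv Y j k l i + (if l = i then ∑ m, Y a m * Gv Y j k l m else 0))) := by
  have h0 : dAk j k Y (Pi.single a (Pi.single i 1))
      = ∑ l, detL p (Function.update (Function.update (Sf Y) j (Pi.single k 1)) l
          (Function.update (dS Y (Pi.single a (Pi.single i 1))) j 0 l)) := by
    simp [dAk, ContinuousLinearMap.comp_apply, ContinuousMultilinearMap.linearDeriv_apply]
  rw [h0]
  refine Finset.sum_congr rfl fun l _ => ?_
  by_cases hl : l = j
  · subst hl
    rw [Function.update_self, if_pos rfl]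
    rw [detL_update]
    exact det_updateRow_zero _ _
  · rw [Function.update_of_ne hl, if_neg hl]
    rw [dS_single (j := i), detL_update, Matrix.det_updateRow_add,
      Matrix.det_updateRow_smul, Matrix.det_updateRow_smul]
    have e1 : ((Matrix.of (Function.update (Sf Y) j (Pi.single k 1))).updateRow l
        (Pi.single i 1)).det = Gv Y j k l i := rfl
    have e2 : ((Matrix.of (Function.update (Sf Y) j (Pi.single k 1))).updateRow l
        (Y a)).det = ∑ m, Y a m * Gv Y j k l m := by
      rw [det_updateRow_expand]
      refine Finset.sum_congr rfl fun m _ => ?_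
      rw [Matrix.adjugate_apply]
      rfl
    rw [e1, e2]
    by_cases hli : l = i <;> simp [hli, add_comm]

lemma adj_symm' (S : Matrix (Fin p) (Fin p) ℝ) (hsym : Sᵀ = S) (k j : Fin p) :
    S.adjugate k j = S.adjugate j k := by
  have h := Matrix.adjugate_transpose S
  rw [hsym] at h
  calc S.adjugate k j = (S.adjugate)ᵀ j k := rfl
    _ = S.adjugate j k := by rw [h]

lemma mul_adj_entry (S : Matrix (Fin p) (Fin p) ℝ) (k y : Fin p) :
    ∑ m, S k m * S.adjugate m y = S.det * (if k = y then 1 else 0) := by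
  have h := congrFun (congrFun (Matrix.mul_adjugate S) k) y
  rw [Matrix.mul_apply] at h
  rw [h]
  simp [Matrix.smul_apply, Matrix.one_apply]

lemma sumASA (S : Matrix (Fin p) (Fin p) ℝ) (hsym : Sᵀ = S) (x y : Fin p) :
    ∑ k, ∑ m, S k m * (S.adjugate k x * S.adjugate m y) = S.det * S.adjugate x y := by
  have h1 : ∀ k, ∑ m, S k m * (S.adjugate k x * S.adjugate m y)
      = S.adjugate k x * (S.det * (if k = y then 1 else 0)) := by
    intro k
    rw [← mul_adj_entry S k y, Finset.mul_sum]
    exact Finset.sum_congr rfl fun m _ => by ring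
  simp only [h1, mul_ite, mul_one, mul_zero, Finset.sum_ite_eq', Finset.mem_univ, if_true]
  rw [adj_symm' S hsym y x]
  ring

lemma sumTr (S : Matrix (Fin p) (Fin p) ℝ) :
    ∑ k, ∑ m, S k m * S.adjugate m k = (p : ℝ) * S.det := by
  have h1 : ∀ k : Fin p, ∑ m, S k m * S.adjugate m k
      = S.det * (if k = k then 1 else 0) := fun k => mul_adj_entry S k k
  simp only [h1, if_pos rfl, mul_one]
  simp [Finset.sum_const, Finset.card_univ, mul_comm]

lemma isUnit_det_of_rank (M : Fin n → Fin p → ℝ) (hrank : (Matrix.of M).rank = p) :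
    IsUnit ((Matrix.of M)ᵀ * Matrix.of M).det := by
  set S := (Matrix.of M)ᵀ * Matrix.of M with hS
  have h1 : S.rank = p := by rw [hS, Matrix.rank_transpose_mul_self, hrank]
  have h2 : LinearMap.range S.mulVecLin = ⊤ := by
    apply Submodule.eq_top_of_finrank_eq
    rw [← Matrix.rank, h1]
    simp [Module.finrank_pi]
  have h3 : Function.Surjective S.mulVec := by
    have h4 := LinearMap.range_eq_top.mp h2
    intro v
    obtain ⟨w, hw⟩ := h4 v
    exact ⟨w, by simpa [Matrix.mulVecLin_apply] using hw⟩
  rw [← Matrix.isUnit_iff_isUnit_det]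
  exact Matrix.mulVec_surjective_iff_isUnit.mp h3

lemma hPP_lemma (M : Fin n → Fin p → ℝ) (i j : Fin p) :
    ∑ a, Pf M a i * Pf M a j
      = (Matrix.of (Sf M)).det * (Matrix.of (Sf M)).adjugate i j := by
  set S := Matrix.of (Sf M) with hS
  have hsym : Sᵀ = S := Sf_symm M
  have h1 : ∀ a, Pf M a i * Pf M a j
      = ∑ k, ∑ m, (M a k * M a m) * (S.adjugate k i * S.adjugate m j) := by
    intro a
    rw [Pf, Pf, Finset.sum_mul_sum]
    exact Finset.sum_congr rfl fun k _ => Finset.sum_congr rfl fun m _ => by ring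
  simp only [h1]
  rw [Finset.sum_comm]
  have h2 : ∀ k, ∑ a, ∑ m, (M a k * M a m) * (S.adjugate k i * S.adjugate m j)
      = ∑ m, S k m * (S.adjugate k i * S.adjugate m j) := by
    intro k
    rw [Finset.sum_comm]
    refine Finset.sum_congr rfl fun m _ => ?_
    have : S k m = ∑ a, M a k * M a m := rfl
    rw [this, Finset.sum_mul]
  simp only [h2]
  exact sumASA S hsym i j

lemma hW_lemma (M : Fin n → Fin p → ℝ) (hu : IsUnit ((Matrix.of (Sf M)).det)) (i j : Fin p) :
    ∑ a, ∑ k, M a k * (∑ l, (if l = j then 0 else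
        (M a l * Gv M j k l i + (if l = i then ∑ m, M a m * Gv M j k l m else 0))))
      = (1 - (p:ℝ)) * (Matrix.of (Sf M)).adjugate i j := by
  set S := Matrix.of (Sf M) with hS
  have hsym : Sᵀ = S := Sf_symm M
  have hd : S.det ≠ 0 := hu.ne_zero
  have hSa : ∀ k m : Fin p, S k m = ∑ a, M a k * M a m := fun k m => rfl
  have h1 : ∀ (x y : Fin p) (C : ℝ), ∑ a, M a x * (M a y * C) = S x y * C := by
    intro x y C
    rw [hSa, Finset.sum_mul]
    exact Finset.sum_congr rfl fun a _ => by ring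
  have h2 : ∀ (x : Fin p) (G : Fin p → ℝ),
      ∑ a, M a x * (∑ m, M a m * G m) = ∑ m, S x m * G m := by
    intro x G
    have e1 : ∀ a, M a x * (∑ m, M a m * G m) = ∑ m, M a x * (M a m * G m) :=
      fun a => Finset.mul_sum _ _ _
    simp only [e1]
    rw [Finset.sum_comm]
    exact Finset.sum_congr rfl fun m _ => h1 x m (G m)
  -- Step A: reshuffle sums
  have stepA : ∑ a, ∑ k, M a k * (∑ l, (if l = j then 0 else
        (M a l * Gv M j k l i + (if l = i then ∑ m, M a m * Gv M j k l m else 0))))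
      = ∑ k, ∑ l, ∑ a, M a k * (if l = j then 0 else
        (M a l * Gv M j k l i + (if l = i then ∑ m, M a m * Gv M j k l m else 0))) := by
    rw [Finset.sum_comm]
    refine Finset.sum_congr rfl fun k _ => ?_
    rw [Finset.sum_comm]
    exact Finset.sum_congr rfl fun a _ => Finset.mul_sum _ _ _
  rw [stepA]
  -- Step B: compute the inner a-sum
  have stepB : ∀ k l, ∑ a, M a k * (if l = j then 0 else
        (M a l * Gv M j k l i + (if l = i then ∑ m, M a m * Gv M j k l m else 0)))
      = (if l = j then 0 else
          (S k l * Gv M j k l i + (if l = i then ∑ m, S k m * Gv M j k l m else 0))) := by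
    intro k l
    by_cases hl : l = j
    · simp [hl]
    · simp only [if_neg hl]
      by_cases hli : l = i
      · simp only [if_pos hli, mul_add, Finset.sum_add_distrib]
        rw [h1, h2]
      · simp only [if_neg hli, add_zero]
        rw [h1]
  simp only [stepB]
  -- Step C: substitute the cofactor formula and drop the outer `if`
  have hG : ∀ k l m, l ≠ j → Gv M j k l m
      = (S.adjugate k j * S.adjugate m l - S.adjugate k l * S.adjugate m j) * (S.det)⁻¹ := by
    intro k l m hl
    have hGf := Gform S hu (Ne.symm hl) k m
    rw [div_eq_mul_inv] at hGf
    exact hGf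
  have stepC : ∀ k l, (if l = j then 0 else
        (S k l * Gv M j k l i + (if l = i then ∑ m, S k m * Gv M j k l m else 0)))
      = S k l * ((S.adjugate k j * S.adjugate i l - S.adjugate k l * S.adjugate i j) * (S.det)⁻¹)
        + (if l = i then
            ∑ m, S k m * ((S.adjugate k j * S.adjugate m l
              - S.adjugate k l * S.adjugate m j) * (S.det)⁻¹) else 0) := by
    intro k l
    by_cases hl : l = j
    · subst hl
      simp
    · rw [if_neg hl, hG k l i hl]
      congr 1
      by_cases hli : l = i
      · rw [if_pos hli, if_pos hli]
        exact Finset.sum_congr rfl fun m _ => by rw [hG k l m hl]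
      · rw [if_neg hli, if_neg hli]
  simp only [stepC]
  simp only [Finset.sum_add_distrib]
  have sum_fact : ∀ F : Fin p → Fin p → ℝ,
      ∑ k, ∑ m, F k m * (S.det)⁻¹ = (∑ k, ∑ m, F k m) * (S.det)⁻¹ := by
    intro F
    rw [Finset.sum_mul]
    exact Finset.sum_congr rfl fun k _ => (Finset.sum_mul _ _ _).symm
  have hT2 : ∑ k, ∑ l, (if l = i then ∑ m, S k m * ((S.adjugate k j * S.adjugate m l
      - S.adjugate k l * S.adjugate m j) * (S.det)⁻¹) else 0) = 0 := by
    have e0 : ∀ k : Fin p, ∑ l, (if l = i then ∑ m, S k m * ((S.adjugate k j * S.adjugate m l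
        - S.adjugate k l * S.adjugate m j) * (S.det)⁻¹) else 0)
        = ∑ m, S k m * ((S.adjugate k j * S.adjugate m i
            - S.adjugate k i * S.adjugate m j) * (S.det)⁻¹) := by
      intro k
      rw [Finset.sum_ite_eq' Finset.univ i, if_pos (Finset.mem_univ i)]
    simp only [e0]
    have e1 : ∀ k m : Fin p, S k m * ((S.adjugate k j * S.adjugate m i
        - S.adjugate k i * S.adjugate m j) * (S.det)⁻¹)
        = (S k m * (S.adjugate k j * S.adjugate m i)
            - S k m * (S.adjugate k i * S.adjugate m j)) * (S.det)⁻¹ := fun k m => by ring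
    simp only [e1]
    rw [sum_fact]
    simp only [Finset.sum_sub_distrib]
    rw [sumASA S hsym j i, sumASA S hsym i j, adj_symm' S hsym j i]
    simp
  have hT1 : ∑ k, ∑ l, S k l * ((S.adjugate k j * S.adjugate i l
      - S.adjugate k l * S.adjugate i j) * (S.det)⁻¹) = (1 - (p:ℝ)) * S.adjugate i j := by
    have e1 : ∀ k l : Fin p, S k l * ((S.adjugate k j * S.adjugate i l
        - S.adjugate k l * S.adjugate i j) * (S.det)⁻¹)
        = (S k l * (S.adjugate k j * S.adjugate l i)
            - (S k l * S.adjugate l k) * S.adjugate i j) * (S.det)⁻¹ := by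
      intro k l
      rw [adj_symm' S hsym i l, adj_symm' S hsym k l]
      ring
    simp only [e1]
    rw [sum_fact]
    simp only [Finset.sum_sub_distrib]
    rw [sumASA S hsym j i]
    have e2 : ∑ k, ∑ l, (S k l * S.adjugate l k) * S.adjugate i j
        = ((p:ℝ) * S.det) * S.adjugate i j := by
      rw [← sumTr S, Finset.sum_mul]
      exact Finset.sum_congr rfl fun k _ => (Finset.sum_mul _ _ _).symm
    rw [e2, adj_symm' S hsym j i]
    field_simp
  rw [hT1, hT2, add_zero]

lemma dP_single (a : Fin n) (i j : Fin p) (Y : Fin n → Fin p → ℝ) :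
    dP a j Y (Pi.single a (Pi.single i 1))
      = (Matrix.of (Sf Y)).adjugate i j
        + ∑ k, Y a k * dAk j k Y (Pi.single a (Pi.single i 1)) := by
  rw [dP]
  rw [ContinuousLinearMap.sum_apply]
  have e : ∀ k, (Y a k • dAk j k Y + Ak j k Y • coord a k) (Pi.single a (Pi.single i 1))
      = Y a k * dAk j k Y (Pi.single a (Pi.single i 1))
        + Ak j k Y * (if k = i then 1 else 0) := by
    intro k
    rw [ContinuousLinearMap.add_apply, ContinuousLinearMap.smul_apply,
      ContinuousLinearMap.smul_apply, smul_eq_mul, smul_eq_mul, coord_apply]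
    congr 1
    congr 1
    rw [Pi.single_eq_same, Pi.single_apply]
  simp only [e, Finset.sum_add_distrib, mul_ite, mul_one, mul_zero,
    Finset.sum_ite_eq', Finset.mem_univ, if_true]
  rw [Ak_eq, add_comm]

end
end SVSAux

open SVSAux

/-- Corollary 4.2: when `n − p − 1 > 0`, the matrix Laplacian of
`π_SVS(M) = det(MᵀM)^{-(n−p−1)/2}` vanishes at every full column-rank `M`. -/
theorem matLap_svsPrior_fullRank {n p : ℕ} (hp : 0 < p) (hnp : p + 1 < n)
    (M : Fin n → Fin p → ℝ) (hrank : (Matrix.of M).rank = p) :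
    matLap (fun Y : Fin n → Fin p → ℝ =>
        Matrix.det ((Matrix.of Y)ᵀ * Matrix.of Y) ^ (-((n : ℝ) - p - 1) / 2)) M
      = 0 := by
  classical
  set c : ℝ := -((n : ℝ) - p - 1) / 2 with hc
  have hf : (fun Y : Fin n → Fin p → ℝ =>
      Matrix.det ((Matrix.of Y)ᵀ * Matrix.of Y) ^ c) = f₀ n p c := by
    funext Y
    rw [f₀, Df, detL_apply, of_Sf]
  rw [hf]
  have hu : IsUnit ((Matrix.of (Sf M)).det) := by
    rw [of_Sf]; exact isUnit_det_of_rank M hrank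
  have hDfM : Df (p := p) M = (Matrix.of (Sf M)).det := by rw [Df, detL_apply]
  have hd : Df (p := p) M ≠ 0 := by rw [hDfM]; exact hu.ne_zero
  have hdet : (Matrix.of (Sf M)).det ≠ 0 := hu.ne_zero
  have hev : ∀ᶠ Y in nhds M, Df (p := p) Y ≠ 0 :=
    (hasFDerivAt_Df M).continuousAt.eventually_ne hd
  ext i j
  show ∑ a, pd a i (pd a j (f₀ n p c)) M = 0
  have hpd : ∀ a : Fin n, pd a j (f₀ n p c) =ᶠ[nhds M] phi c a j := fun a =>
    hev.mono fun Y hY => pd_f₀ c a j Y hY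
  have hstep : ∀ a : Fin n, pd a i (pd a j (f₀ n p c)) M = pd a i (phi c a j) M := by
    intro a
    show fderiv ℝ (pd a j (f₀ n p c)) M (Pi.single a (Pi.single i 1)) = _
    rw [Filter.EventuallyEq.fderiv_eq (hpd a)]
    rfl
  simp only [hstep]
  -- evaluate the derivative of phi
  have hval : ∀ a : Fin n, pd a i (phi c a j) M
      = (2 * c) * (Df M ^ (c - 1) * (dP a j M (Pi.single a (Pi.single i 1)))
          + Pf M a j * ((c - 1) * Df M ^ (c - 1 - 1) * (dD M (Pi.single a (Pi.single i 1))))) := by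
    intro a
    unfold pd
    rw [(hasFDerivAt_phi c a j M hd).fderiv]
    rw [ContinuousLinearMap.smul_apply, ContinuousLinearMap.add_apply,
      ContinuousLinearMap.smul_apply, ContinuousLinearMap.smul_apply,
      ContinuousLinearMap.smul_apply]
    simp only [smul_eq_mul]
  simp only [hval]
  -- explicit values of the directional derivatives
  simp only [key1, dP_single]
  simp only [dAk_single]
  -- now sum over a
  set d : ℝ := (Matrix.of (Sf M)).det with hdd
  set A : Matrix (Fin p) (Fin p) ℝ := (Matrix.of (Sf M)).adjugate with hA
  have e : ∀ a : Fin n,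
      (2 * c) * (Df M ^ (c - 1) * (A i j
          + ∑ k, M a k * (∑ l, (if l = j then 0 else
              (M a l * Gv M j k l i + (if l = i then ∑ m, M a m * Gv M j k l m else 0)))))
        + Pf M a j * ((c - 1) * Df M ^ (c - 1 - 1) * (2 * Pf M a i)))
      = (2 * c * Df M ^ (c - 1)) * A i j
        + (2 * c * Df M ^ (c - 1))
            * (∑ k, M a k * (∑ l, (if l = j then 0 else
              (M a l * Gv M j k l i + (if l = i then ∑ m, M a m * Gv M j k l m else 0)))))
        + (4 * c * (c - 1) * Df M ^ (c - 1 - 1)) * (Pf M a i * Pf M a j) := by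
    intro a
    ring
  simp only [e]
  rw [Finset.sum_add_distrib, Finset.sum_add_distrib, Finset.sum_const,
    Finset.card_univ, Fintype.card_fin, ← Finset.mul_sum, ← Finset.mul_sum]
  rw [hW_lemma M hu i j, hPP_lemma M i j]
  rw [← hdd, ← hA]
  have hpow : Df (p := p) M ^ (c - 1 - 1) * d = Df M ^ (c - 1) := by
    rw [hDfM]
    have h2 := Real.rpow_add_one (x := (Matrix.of (Sf M)).det) hdet (c - 1 - 1)
    rw [show c - 1 - 1 + 1 = c - 1 by ring] at h2
    rw [hdd]
    exact h2.symm
  have hDfd : Df (p := p) M ^ (c - 1 - 1) * (d * A i j) = Df M ^ (c - 1) * A i j := by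
    rw [← mul_assoc, hpow]
  rw [nsmul_eq_mul]
  have reassoc : 4 * c * (c - 1) * Df (p := p) M ^ (c - 1 - 1) * (d * A i j)
      = 4 * c * (c - 1) * (Df M ^ (c - 1 - 1) * (d * A i j)) := by ring
  rw [reassoc, hDfd, hc]
  ring
end
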